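/- arXiv:1611.09156 — 8 statements merged into one kernel-verified Lean document; each statement's English description precedes it below -/
import Mathlib

section
/- (Analogue of Stodola's necessary condition.) Let p(z) = a_0 z^n + a_1 z^{n−1} + ⋯ + a_n be a real polynomial of degree n ≥ 1 with a_0 > 0. If p is self-interlacing of kind I, then (−1)^{j(j+1)/2} a_j > 0 for every j = 0, 1, …, n. -/
open Polynomial

/-- A real polynomial `p` is *self-interlacing of kind I* if all of its `natDegree` roots
are real and simple and, listed in order of decreasing absolute value `λ₀, λ₁, …`,
they satisfy `λ₀ > -λ₁ > λ₂ > -λ₃ > ⋯ > 0`. -/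
def SelfInterlacingI (p : Polynomial ℝ) : Prop :=
  ∃ lam : Fin p.natDegree → ℝ,
    (p = Polynomial.C p.leadingCoeff *
        ∏ i : Fin p.natDegree, (Polynomial.X - Polynomial.C (lam i))) ∧
    StrictAnti (fun i : Fin p.natDegree => (-1 : ℝ) ^ (i : ℕ) * lam i) ∧
    ∀ i : Fin p.natDegree, 0 < (-1 : ℝ) ^ (i : ℕ) * lam i

/-!
Write `G_j(s) = (-1)^(j choose 2) e_j(s)` for the signed elementary symmetric functions of the roots.
Splitting off the root `λ₀` of largest modulus, `e_{k+1}(λ₀ :: t) = e_{k+1}(t) + λ₀ e_k(t)` turns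
into `G_{k+1}(λ₀ :: t) = λ₀ G_k(-t) - (-1)^k G_{k+1}(-t)`, and `-t` is again self-interlacing,
with largest root `-λ₁ < λ₀`. For odd `k` both terms are nonnegative; for even `k` the bound
`G_{k+1}(-t) ≤ -λ₁ G_k(-t)` is needed, which is proved alongside positivity by the same
induction. Vieta's formulas give `(-1)^(j(j+1)/2) a_j = a₀ G_j`.
-/

theorem Nat.choose_two_succ (n : ℕ) : (n + 1).choose 2 = n.choose 2 + n := by
  simp only [Nat.choose_two_right, Nat.triangle_succ]

theorem Nat.mul_succ_div_two (n : ℕ) : n * (n + 1) / 2 = n.choose 2 + n := by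
  rw [← Nat.choose_two_succ, Nat.choose_two_right, Nat.add_sub_cancel, mul_comm]

theorem neg_one_pow_sq {R : Type*} [Monoid R] [HasDistribNeg R] (n : ℕ) :
    ((-1 : R) ^ n) ^ 2 = 1 := by
  rw [← pow_mul, pow_mul', neg_one_sq, one_pow]

namespace Multiset

variable {R : Type*} [CommRing R]

theorem esymm_cons_succ (a : R) (s : Multiset R) (k : ℕ) :
    (a ::ₘ s).esymm (k + 1) = s.esymm (k + 1) + a * s.esymm k := by
  simp [esymm, powersetCard_cons, map_map, sum_map_mul_left]

theorem esymm_eq_zero_of_card_lt {s : Multiset R} {k : ℕ} (h : card s < k) : s.esymm k = 0 := by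
  simp [esymm, powersetCard_eq_empty k h]

end Multiset

section SignedEsymm

variable {R : Type*} [CommRing R]

def signedEsymm (s : Multiset R) (j : ℕ) : R := (-1) ^ j.choose 2 * s.esymm j

@[simp] theorem signedEsymm_zero (s : Multiset R) : signedEsymm s 0 = 1 := by
  simp [signedEsymm, Multiset.esymm, Multiset.powersetCard_zero_left]

theorem signedEsymm_eq_zero_of_card_lt {s : Multiset R} {j : ℕ} (h : Multiset.card s < j) :
    signedEsymm s j = 0 := by
  simp [signedEsymm, Multiset.esymm_eq_zero_of_card_lt h]

theorem signedEsymm_cons_succ (a : R) (s : Multiset R) (k : ℕ) :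
    signedEsymm (a ::ₘ s) (k + 1) =
      a * signedEsymm (s.map Neg.neg) k - (-1) ^ k * signedEsymm (s.map Neg.neg) (k + 1) := by
  simp only [signedEsymm, Multiset.esymm_cons_succ, Multiset.esymm_neg, Nat.choose_two_succ,
    pow_add]
  linear_combination (-((-1) ^ k.choose 2 * (-1) ^ k * s.esymm (k + 1))) *
    neg_one_pow_sq (R := R) k

end SignedEsymm

section SelfInterlacing

variable {R : Type*} [CommRing R] [LinearOrder R]

-- The roots `λ₀, λ₁, …` in order of decreasing modulus: `λ₀ > 0`, and `-λ₁, -λ₂, …` is again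
-- self-interlacing, with first entry below `λ₀`.
inductive List.SelfInterlacing : List R → Prop
  | nil : List.SelfInterlacing []
  | cons {a : R} {t : List R} : 0 < a → (∀ b ∈ (t.map Neg.neg).head?, b < a) →
      List.SelfInterlacing (t.map Neg.neg) → List.SelfInterlacing (a :: t)

theorem List.selfInterlacing_ofFn {m : ℕ} (lam : Fin m → R)
    (hanti : StrictAnti fun i : Fin m => (-1 : R) ^ (i : ℕ) * lam i)
    (hpos : ∀ i : Fin m, 0 < (-1 : R) ^ (i : ℕ) * lam i) :
    (List.ofFn lam).SelfInterlacing := by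
  induction m with
  | zero => simpa using List.SelfInterlacing.nil
  | succ m ih =>
    have hshift : (fun i : Fin m => (-1 : R) ^ (i : ℕ) * -lam i.succ) =
        (fun i : Fin (m + 1) => (-1 : R) ^ (i : ℕ) * lam i) ∘ Fin.succ := by
      funext i
      simp [pow_succ]
    have htail := ih (fun i => -lam i.succ) (hshift ▸ hanti.comp_strictMono Fin.strictMono_succ)
      (fun i => congrFun hshift i ▸ hpos i.succ)
    rw [List.ofFn_succ]
    refine .cons (by simpa using hpos 0) ?_ (by rwa [List.map_ofFn])
    rcases m with _ | m
    · simp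
    · simpa [List.ofFn_succ] using hanti Fin.zero_lt_one

end SelfInterlacing

section Ordered

variable {R : Type*} [CommRing R] [LinearOrder R] [IsStrictOrderedRing R]

theorem signedEsymm_odd_le_mul {a : R} {s : Multiset R} (ha : 0 ≤ a)
    (hs : ∀ j, 0 ≤ signedEsymm (s.map Neg.neg) j) (k : ℕ) :
    signedEsymm (a ::ₘ s) (2 * k + 1) ≤ a * signedEsymm (a ::ₘ s) (2 * k) := by
  rw [signedEsymm_cons_succ, (even_two_mul k).neg_one_pow, one_mul]
  rcases k with _ | k
  · simpa using hs 1
  · rw [show 2 * (k + 1) = (2 * k + 1) + 1 by ring, signedEsymm_cons_succ,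
      (odd_two_mul_add_one k).neg_one_pow]
    nlinarith [hs (2 * k + 1 + 1 + 1), mul_nonneg (mul_nonneg ha ha) (hs (2 * k + 1))]

namespace List.SelfInterlacing

theorem signedEsymm_pos_and_le {l : List R} (hl : l.SelfInterlacing) :
    (∀ j ≤ l.length, 0 < signedEsymm (l : Multiset R) j) ∧
      ∀ c ∈ l.head?, ∀ k, signedEsymm (l : Multiset R) (2 * k + 1) ≤
        c * signedEsymm (l : Multiset R) (2 * k) := by
  induction hl with
  | nil => simp
  | @cons a t ha hhead _ ih =>
    obtain ⟨hpos, hle⟩ := ih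
    rw [← Multiset.cons_coe]
    rw [← Multiset.map_coe] at hpos hle
    have hnonneg : ∀ j, 0 ≤ signedEsymm ((t : Multiset R).map Neg.neg) j := by
      intro j
      rcases le_or_gt j t.length with hj | hj
      · exact (hpos j (by simpa using hj)).le
      · simp [signedEsymm_eq_zero_of_card_lt, hj]
    refine ⟨?_, by simpa using signedEsymm_odd_le_mul ha.le hnonneg⟩
    rintro (_ | k) hk
    · simp
    have hGk := hpos k (by simpa using hk)
    rw [signedEsymm_cons_succ]
    rcases Nat.even_or_odd' k with ⟨i, rfl | rfl⟩
    · rw [(even_two_mul i).neg_one_pow, one_mul, sub_pos]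
      rcases t with _ | ⟨b, s⟩
      · obtain rfl : i = 0 := by simpa using hk
        simpa [signedEsymm_eq_zero_of_card_lt (show Multiset.card (0 : Multiset R) < 1 by simp)]
          using ha
      · nlinarith [hhead (-b) (by simp), hle (-b) (by simp) i]
    · rw [(odd_two_mul_add_one i).neg_one_pow]
      nlinarith [hnonneg (2 * i + 1 + 1)]

end List.SelfInterlacing

end Ordered

theorem Polynomial.coeff_prod_X_sub_C_fin {R : Type*} [CommRing R] {m : ℕ} (lam : Fin m → R)
    {j : ℕ} (hj : j ≤ m) :
    (∏ i, (X - C (lam i))).coeff (m - j) = (-1) ^ j * (List.ofFn lam : Multiset R).esymm j := by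
  rw [Finset.prod_eq_multiset_prod,
    show (fun i => X - C (lam i)) = (fun t => X - C t) ∘ lam from rfl, ← Multiset.map_map,
    Fin.univ_val_map, Multiset.prod_X_sub_C_coeff _ (by simp)]
  simp [Nat.sub_sub_self hj]

theorem selfInterlacing_stodola_general
    (n : ℕ) (p : Polynomial ℝ)
    (hdeg : p.natDegree = n) (hlead : 0 < p.leadingCoeff)
    (hsi : SelfInterlacingI p) :
    ∀ j, j ≤ n → 0 < (-1 : ℝ) ^ (j * (j + 1) / 2) * p.coeff (n - j) := by
  obtain ⟨lam, hp, hanti, hpos⟩ := hsi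
  intro j hj
  have hj' : j ≤ (List.ofFn lam).length := by simpa [hdeg] using hj
  have hsign := (List.selfInterlacing_ofFn lam hanti hpos).signedEsymm_pos_and_le.1 j hj'
  rw [hp, coeff_C_mul, ← hdeg, coeff_prod_X_sub_C_fin lam (hdeg ▸ hj), Nat.mul_succ_div_two,
    pow_add]
  calc 0 < p.leadingCoeff * signedEsymm (List.ofFn lam : Multiset ℝ) j := mul_pos hlead hsign
    _ = _ := by
      rw [signedEsymm]
      linear_combination
        (-(p.leadingCoeff * (-1) ^ j.choose 2 * (List.ofFn lam : Multiset ℝ).esymm j)) *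
          neg_one_pow_sq (R := ℝ) j

/-- Analogue of Stodola's necessary condition: if `p(z) = a_0 z^n + ⋯ + a_n` of degree
`n ≥ 1` with `a_0 > 0` is self-interlacing of kind I, then `(-1)^{j(j+1)/2} a_j > 0`
for every `j = 0, 1, …, n`. -/
theorem selfInterlacing_stodola
    (n : ℕ) (hn : 1 ≤ n) (p : Polynomial ℝ)
    (hdeg : p.natDegree = n) (hlead : 0 < p.leadingCoeff)
    (hsi : SelfInterlacingI p) :
    ∀ j, j ≤ n → 0 < (-1 : ℝ) ^ (j * (j + 1) / 2) * p.coeff (n - j) :=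
  selfInterlacing_stodola_general n p hdeg hlead hsi
end

section
/- Let p(z) = a_0 z^n + a_1 z^{n−1} + ⋯ + a_n be an arbitrary real polynomial of degree n ≥ 1, and let q(z) = Σ_{k=0}^n (−1)^{k(k+1)/2} a_k z^{n−k} be its dual polynomial. Then for every real λ one has p(λ) = 0 if and only if Re q(iλ) = (−1)^{n−1} Im q(iλ). -/
open Polynomial

/-- The dual polynomial `q(z) = Σ_{k=0}^n (-1)^{k(k+1)/2} a_k z^{n-k}`
of `p(z) = Σ_{k=0}^n a_k z^{n-k}`, where `n = p.natDegree`. -/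
noncomputable def dualPoly (p : Polynomial ℝ) : Polynomial ℝ :=
  ∑ k ∈ Finset.range (p.natDegree + 1),
    Polynomial.C ((-1 : ℝ) ^ (k * (k + 1) / 2) * p.coeff (p.natDegree - k)) *
      Polynomial.X ^ (p.natDegree - k)
lemma tri_succ (m : ℕ) : (-1:ℝ)^((m+1)*(m+2)/2) = (-1)^(m*(m+1)/2) * (-1)^(m+1) := by
  obtain ⟨c, hc⟩ := Nat.even_mul_succ_self m
  have h1 : m*(m+1)/2 = c := by omega
  have h2 : (m+1)*(m+2)/2 = c + (m+1) := by
    have : (m+1)*(m+2) = m*(m+1) + 2*(m+1) := by ring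
    omega
  rw [h1, h2, pow_add]

lemma key (k : ℕ) : ∀ j : ℕ,
    (-1:ℝ)^(k*(k+1)/2) * ((Complex.I^j).re + (-1:ℝ)^(j+k) * (Complex.I^j).im)
      = (-1:ℝ)^((j+k)*(j+k+1)/2) := by
  intro j
  induction j with
  | zero => simp
  | succ j ih =>
    have h : j+1+k = (j+k)+1 := by omega
    rw [show (j+1+k)*(j+1+k+1) = ((j+k)+1)*((j+k)+2) by ring, tri_succ (j+k)]
    have hx : (-1:ℝ)^j * (-1:ℝ)^j = 1 := by
      rw [← pow_add, ← two_mul, pow_mul]; norm_num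
    have h2 : ∀ m:ℕ, (-1:ℝ)^(m*2) = 1 := fun m => by
      rw [mul_comm, pow_mul, neg_one_sq, one_pow]
    rw [← ih]
    simp only [pow_succ, Complex.mul_re, Complex.mul_im, Complex.I_re, Complex.I_im, pow_add]
    ring_nf
    simp only [h2]
    ring

/-- For an arbitrary real polynomial `p` of degree `n ≥ 1` with dual polynomial `q`,
a real `λ` is a root of `p` iff `Re q(iλ) = (-1)^{n-1} Im q(iλ)`. -/
theorem dual_root_characterization
    (n : ℕ) (hn : 1 ≤ n) (p : Polynomial ℝ) (hdeg : p.natDegree = n) :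
    ∀ lam : ℝ, Polynomial.eval lam p = 0 ↔
      (Polynomial.aeval (Complex.I * (lam : ℂ)) (dualPoly p)).re =
        (-1 : ℝ) ^ (n - 1) *
          (Polynomial.aeval (Complex.I * (lam : ℂ)) (dualPoly p)).im := by
  intro lam
  set A := Polynomial.aeval (Complex.I * (lam : ℂ)) (dualPoly p) with hAdef
  have hA : A = ∑ k ∈ Finset.range (n+1),
      ((((-1:ℝ)^(k*(k+1)/2) * p.coeff (n-k)) : ℝ) : ℂ) * (Complex.I*(lam:ℂ))^(n-k) := by
    rw [hAdef]
    unfold dualPoly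
    rw [map_sum, hdeg]
    refine Finset.sum_congr rfl fun k _ => ?_
    simp [Complex.coe_algebraMap]
  have hev : Polynomial.eval lam p = ∑ k ∈ Finset.range (n+1), p.coeff (n-k) * lam^(n-k) := by
    rw [Polynomial.eval_eq_sum_range, hdeg, ← Finset.sum_range_reflect]
    exact Finset.sum_congr rfl fun k hk => by simp only [Nat.add_sub_cancel]
  have hmain : A.re - (-1:ℝ)^(n-1) * A.im = (-1:ℝ)^(n*(n+1)/2) * Polynomial.eval lam p := by
    rw [hA, Complex.re_sum, Complex.im_sum, Finset.mul_sum, ← Finset.sum_sub_distrib]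
    rw [hev, Finset.mul_sum]
    refine Finset.sum_congr rfl fun k hk => ?_
    have hk' : k ≤ n := Nat.lt_succ_iff.mp (Finset.mem_range.mp hk)
    have h1 : ((((-1:ℝ)^(k*(k+1)/2) * p.coeff (n-k)) : ℝ) : ℂ) * (Complex.I*(lam:ℂ))^(n-k)
        = (((((-1:ℝ)^(k*(k+1)/2) * p.coeff (n-k)) * lam^(n-k)) : ℝ) : ℂ) * Complex.I^(n-k) := by
      push_cast
      ring
    rw [h1, Complex.re_ofReal_mul, Complex.im_ofReal_mul]
    have hneg : (-1:ℝ)^(n-1) = -(-1:ℝ)^n := by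
      conv_rhs => rw [show n = (n-1)+1 by omega]
      rw [pow_succ]
      ring
    rw [hneg]
    set e := n - k with he
    have hek : n = e + k := by omega
    rw [hek]
    have hkey := key k e
    linear_combination (lam^e * p.coeff e) * hkey
  have hne : ((-1:ℝ)^(n*(n+1)/2)) ≠ 0 := pow_ne_zero _ (by norm_num)
  constructor
  · intro h
    rw [h, mul_zero] at hmain
    linarith [hmain]
  · intro h
    have h0 : (-1:ℝ)^(n*(n+1)/2) * Polynomial.eval lam p = 0 := by
      rw [← hmain, h]; ring
    exact (mul_eq_zero.mp h0).resolve_left hne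
end

section
/- Let n ≥ 1 and let a_1, …, a_n be real numbers such that 1 − e_2(a_1,…,a_n) + e_4(a_1,…,a_n) − e_6(a_1,…,a_n) + ⋯ ≠ 0, where e_k denotes the k-th elementary symmetric polynomial. Then tan(Σ_{k=1}^n arctan(a_k)) = (e_1 − e_3 + e_5 − ⋯)/(1 − e_2 + e_4 − ⋯), where the numerator is the alternating sum of the odd-indexed elementary symmetric polynomials and the denominator is the alternating sum 1 − e_2 + e_4 − ⋯ of the even-indexed ones. -/
/-!
Each factor `1 + aₖ i` of `P = ∏ₖ (1 + aₖ i)` has argument `arctan aₖ`, so `Σ arctan aₖ` is an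
argument of `P` modulo `2π` and its tangent is `Im P / Re P`. Expanding the product,
`P = Σₖ iᵏ eₖ`, whose real part is `1 - e₂ + e₄ - ⋯` and whose imaginary part is
`e₁ - e₃ + e₅ - ⋯`. When the real part vanishes both sides are `0`, since `Real.tan` is `0`
where the cosine is.
-/

open Finset Complex

noncomputable def esym (n : ℕ) (a : Fin n → ℝ) (k : ℕ) : ℝ :=
  ∑ s ∈ Finset.powersetCard k (Finset.univ : Finset (Fin n)), ∏ i ∈ s, a i

theorem Finset.sum_range_two_mul {M : Type*} [AddCommMonoid M] (f : ℕ → M) (N : ℕ) :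
    ∑ k ∈ range (2 * N), f k = ∑ m ∈ range N, f (2 * m) + ∑ m ∈ range N, f (2 * m + 1) := by
  induction N with
  | zero => simp
  | succ N ih =>
    rw [mul_add, mul_one, sum_range_succ, sum_range_succ, ih, sum_range_succ, sum_range_succ]
    abel

theorem Finset.sum_range_succ_eq_even_add_odd {M : Type*} [AddCommMonoid M] (f : ℕ → M) (n : ℕ) :
    ∑ k ∈ range (n + 1), f k =
      ∑ m ∈ range (n / 2 + 1), f (2 * m) + ∑ m ∈ range ((n + 1) / 2), f (2 * m + 1) := by
  obtain ⟨t, rfl | rfl⟩ := Nat.even_or_odd' n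
  · rw [sum_range_succ, sum_range_two_mul, sum_range_succ (fun m => f (2 * m))]
    rw [show 2 * t / 2 = t by omega, show (2 * t + 1) / 2 = t by omega]
    abel
  · rw [show 2 * t + 1 + 1 = 2 * (t + 1) by ring, sum_range_two_mul]
    rw [show (2 * t + 1) / 2 + 1 = t + 1 by omega, show 2 * (t + 1) / 2 = t + 1 by omega]

theorem prod_one_add_mul_eq_sum_esym {A : Type*} [CommRing A] [Algebra ℝ A] (n : ℕ)
    (a : Fin n → ℝ) (z : A) :
    ∏ i, (1 + algebraMap ℝ A (a i) * z) =
      ∑ k ∈ range (n + 1), algebraMap ℝ A (esym n a k) * z ^ k := by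
  rw [prod_one_add, sum_powerset, card_univ, Fintype.card_fin]
  refine sum_congr rfl fun k _ => ?_
  rw [esym, map_sum, sum_mul]
  refine sum_congr rfl fun t ht => ?_
  rw [prod_mul_distrib, prod_const, (mem_powersetCard.1 ht).2, map_prod]

theorem Complex.arg_prod_coe_angle {ι : Type*} (s : Finset ι) (w : ι → ℂ)
    (hw : ∀ i ∈ s, w i ≠ 0) :
    (arg (∏ i ∈ s, w i) : Real.Angle) = ∑ i ∈ s, (arg (w i) : Real.Angle) := by
  induction s using Finset.cons_induction with
  | empty => simp
  | cons i s _ ih =>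
    rw [prod_cons, sum_cons, arg_mul_coe_angle (hw i (mem_cons_self i s))
      (prod_ne_zero_iff.2 fun j hj => hw j (mem_cons_of_mem hj)),
      ih fun j hj => hw j (mem_cons_of_mem hj)]

theorem Complex.tan_sum_arg {ι : Type*} (s : Finset ι) (w : ι → ℂ) (hw : ∀ i ∈ s, w i ≠ 0) :
    Real.tan (∑ i ∈ s, arg (w i)) = (∏ i ∈ s, w i).im / (∏ i ∈ s, w i).re := by
  rw [← tan_arg, ← Real.Angle.tan_coe, ← Real.Angle.tan_coe (arg _), arg_prod_coe_angle s w hw]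
  exact congrArg Real.Angle.tan (map_sum Real.Angle.coeHom _ s)

theorem Complex.arg_one_add_mul_I (x : ℝ) : arg (1 + x * I) = Real.arctan x := by
  have hbound : |arg (1 + x * I)| < Real.pi / 2 :=
    abs_arg_lt_pi_div_two_iff.2 (Or.inl (by simp))
  have htan : Real.tan (arg (1 + x * I)) = x := by simp [tan_arg]
  calc arg (1 + x * I) = Real.arctan (Real.tan (arg (1 + x * I))) :=
        (Real.arctan_tan (abs_lt.1 hbound).1 (abs_lt.1 hbound).2).symm
    _ = Real.arctan x := by rw [htan]

theorem prod_one_add_mul_I_eq_esym (n : ℕ) (a : Fin n → ℝ) :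
    ∏ k, (1 + (a k : ℂ) * I) =
      ((∑ m ∈ range (n / 2 + 1), (-1 : ℝ) ^ m * esym n a (2 * m) : ℝ) : ℂ) +
        ((∑ m ∈ range ((n + 1) / 2), (-1 : ℝ) ^ m * esym n a (2 * m + 1) : ℝ) : ℂ) * I := by
  have hexpand := prod_one_add_mul_eq_sum_esym n a I
  simp only [coe_algebraMap] at hexpand
  rw [hexpand, sum_range_succ_eq_even_add_odd]
  push_cast
  rw [sum_mul]
  congr 1 <;> refine sum_congr rfl fun m _ => ?_
  · rw [pow_mul, I_sq, mul_comm]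
  · rw [pow_succ, pow_mul, I_sq]
    ring

theorem tan_sum_arctan_general (n : ℕ) (a : Fin n → ℝ) :
    Real.tan (∑ k, Real.arctan (a k)) =
      (∑ m ∈ Finset.range ((n + 1) / 2), (-1 : ℝ) ^ m * esym n a (2 * m + 1)) /
        (∑ m ∈ Finset.range (n / 2 + 1), (-1 : ℝ) ^ m * esym n a (2 * m)) := by
  simp_rw [← arg_one_add_mul_I]
  rw [tan_sum_arg _ _ fun k _ => ne_zero_of_re_pos (by simp), prod_one_add_mul_I_eq_esym]
  simp only [add_re, add_im, ofReal_re, ofReal_im, re_ofReal_mul, im_ofReal_mul, I_re, I_im,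
    mul_one, mul_zero, zero_add, add_zero]

/-- Tangent of a sum of arctangents: if the alternating sum
`1 - e_2 + e_4 - ⋯` of even elementary symmetric polynomials of `a_1, …, a_n` is nonzero,
then `tan (Σ arctan aₖ) = (e_1 - e_3 + e_5 - ⋯) / (1 - e_2 + e_4 - ⋯)`. -/
theorem tan_sum_arctan (n : ℕ) (hn : 1 ≤ n) (a : Fin n → ℝ)
    (hden : (∑ m ∈ Finset.range (n / 2 + 1), (-1 : ℝ) ^ m * esym n a (2 * m)) ≠ 0) :
    Real.tan (∑ k, Real.arctan (a k)) =
      (∑ m ∈ Finset.range ((n + 1) / 2), (-1 : ℝ) ^ m * esym n a (2 * m + 1)) /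
        (∑ m ∈ Finset.range (n / 2 + 1), (-1 : ℝ) ^ m * esym n a (2 * m)) :=
  tan_sum_arctan_general n a
end

section
/- Let n ≥ 1 and let a be a nonzero complex number. Then the polynomial q(z) = Σ_{k=0}^n (−1)^{k(k+1)/2} · C(n,k) · a^k · z^{n−k} (the dual of (z+a)^n) has exactly the n roots μ_k = (−1)^{n−1} a · tan(π(4k+1)/(4n)) for k = 1, …, n, and these n values are pairwise distinct; in particular, when a is a positive real number, q has n distinct real roots. -/
/-!
The sign `(-1)^{k(k+1)/2}` equals `((1+i) i^k + (1-i)(-i)^k)/2`, so by the binomial theorem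
`2 q(z) = (1+i)(z+ia)^n + (1-i)(z-ia)^n`. Since `(tan θ - i)/(tan θ + i) = -e^{2iθ}`, the two terms
cancel at `z = (-1)^{n-1} a tan θ` as soon as `e^{2inθ} = i`, which holds for `θ = π(4k+1)/(4n)`.
For `k = 1, …, n` these angles give `n` distinct values of `e^{2iθ}`, hence `n` distinct roots of
the monic polynomial `q` of degree `n`, which are therefore all of its roots.
-/

open Polynomial

/-- The roots `μ_k = (-1)^{n-1} a · tan(π(4k+1)/(4n))`, `k = 1, …, n`, of the dual of
`(z+a)^n`. -/
noncomputable def dualBinomialRoot (n : ℕ) (a : ℂ) (k : ℕ) : ℂ :=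
  (-1 : ℂ) ^ (n - 1) * a *
    (Real.tan (Real.pi * (4 * (k : ℝ) + 1) / (4 * (n : ℝ))) : ℂ)

open Complex

namespace Complex

theorem exp_two_mul_mul_I (θ : ℂ) : exp (2 * θ * I) = (cos θ + sin θ * I) ^ 2 := by
  rw [← exp_mul_I, ← exp_nat_mul]; push_cast; ring_nf

theorem tan_sub_I_eq {θ : ℂ} (hθ : cos θ ≠ 0) :
    tan θ - I = -exp (2 * θ * I) * (tan θ + I) := by
  rw [tan_eq_sin_div_cos, exp_two_mul_mul_I]
  field_simp
  linear_combination (I * (cos θ + sin θ * I)) * sin_sq_add_cos_sq θ +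
    (sin θ * cos θ ^ 2 + sin θ + sin θ ^ 2 * cos θ * I) * I_sq

theorem tan_add_I_ne_zero {θ : ℂ} (hθ : cos θ ≠ 0) : tan θ + I ≠ 0 := by
  intro h
  have h' : tan θ - I = 0 := by rw [tan_sub_I_eq hθ, h, mul_zero]
  have : (2 : ℂ) * I = 0 := by linear_combination h - h'
  simp at this

theorem exp_two_mul_mul_I_eq_of_tan_eq {θ₁ θ₂ : ℂ} (h₁ : cos θ₁ ≠ 0)
    (h₂ : cos θ₂ ≠ 0) (h : tan θ₁ = tan θ₂) : exp (2 * θ₁ * I) = exp (2 * θ₂ * I) := by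
  have hexp {θ : ℂ} (hθ : cos θ ≠ 0) :
      exp (2 * θ * I) = -(tan θ - I) / (tan θ + I) := by
    rw [eq_div_iff (tan_add_I_ne_zero hθ), tan_sub_I_eq hθ]; ring
  rw [hexp h₁, hexp h₂, h]

theorem cos_ne_zero_of_exp_eq_I {θ : ℂ} {n : ℕ} (h : exp (2 * n * θ * I) = I) :
    cos θ ≠ 0 := by
  intro hcos
  have hsq : exp (2 * θ * I) = -1 := by
    rw [exp_two_mul_mul_I]
    linear_combination (sin θ ^ 2) * I_sq - sin_sq_add_cos_sq θ +
      (2 * cos θ + 2 * sin θ * I) * hcos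
  rw [show 2 * n * θ * I = n * (2 * θ * I) by ring, exp_nat_mul, hsq] at h
  rcases neg_one_pow_eq_or ℂ n with h1 | h1 <;> simp [h1, Complex.ext_iff] at h

end Complex

theorem neg_one_pow_triangle (k : ℕ) :
    (-1 : ℂ) ^ (k * (k + 1) / 2) = ((1 + I) * I ^ k + (1 - I) * (-I) ^ k) / 2 := by
  induction k using Nat.strong_induction_on with
  | _ k ih =>
    rcases lt_or_ge k 4 with hk | hk
    · interval_cases k <;> norm_num [pow_succ, Complex.ext_iff]
    · obtain ⟨m, rfl⟩ := Nat.exists_eq_add_of_le' hk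
      have hexp : (m + 4) * (m + 4 + 1) / 2 = m * (m + 1) / 2 + 2 * (2 * m + 5) := by
        rw [show (m + 4) * (m + 4 + 1) = m * (m + 1) + 2 * (2 * (2 * m + 5)) by ring,
          Nat.add_mul_div_left _ _ two_pos]
      rw [hexp, pow_add, pow_mul, neg_one_sq, one_pow, mul_one, ih m (by omega), pow_add I,
        pow_add (-I), show (-I) ^ 4 = I ^ 4 by ring, I_pow_four, mul_one, mul_one]

noncomputable def dualBinomial (n : ℕ) (a : ℂ) : ℂ[X] :=
  ∑ k ∈ Finset.range (n + 1), C ((-1 : ℂ) ^ (k * (k + 1) / 2) * (n.choose k : ℂ) * a ^ k) *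
    X ^ (n - k)

theorem eval_dualBinomial (n : ℕ) (a z : ℂ) :
    (dualBinomial n a).eval z = ((1 + I) * (z + I * a) ^ n + (1 - I) * (z - I * a) ^ n) / 2 := by
  rw [dualBinomial, eval_finsetSum, add_comm z, sub_eq_add_neg z, add_comm z, add_pow, add_pow,
    Finset.mul_sum, Finset.mul_sum, ← Finset.sum_add_distrib, Finset.sum_div]
  refine Finset.sum_congr rfl fun k _ ↦ ?_
  simp only [eval_mul, eval_C, eval_pow, eval_X]
  rw [neg_one_pow_triangle k, neg_mul_eq_neg_mul, mul_pow, mul_pow]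
  ring

theorem eval_mul_dualBinomial (n : ℕ) (a x : ℂ) :
    (dualBinomial n a).eval (a * x) = a ^ n * (dualBinomial n 1).eval x := by
  rw [eval_dualBinomial, eval_dualBinomial, show a * x + I * a = a * (x + I * 1) by ring,
    show a * x - I * a = a * (x - I * 1) by ring, mul_pow, mul_pow]
  ring

theorem natDegree_dualBinomial_le (n : ℕ) (a : ℂ) : (dualBinomial n a).natDegree ≤ n := by
  refine natDegree_sum_le_of_forall_le _ _ fun k _ ↦ (natDegree_C_mul_le _ _).trans ?_
  rw [natDegree_X_pow]
  exact Nat.sub_le n k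

theorem monic_dualBinomial (n : ℕ) (a : ℂ) : (dualBinomial n a).Monic := by
  refine monic_of_natDegree_le_of_coeff_eq_one n (natDegree_dualBinomial_le n a) ?_
  rw [dualBinomial, finsetSum_coeff, Finset.sum_eq_single 0]
  · simp
  · intro k hk hk0
    rw [coeff_C_mul, coeff_X_pow, if_neg (by grind), mul_zero]
  · simp

theorem isRoot_dualBinomial_one_tan {θ : ℂ} {n : ℕ} (h : exp (2 * n * θ * I) = I) :
    (dualBinomial n 1).IsRoot ((-1) ^ (n - 1) * tan θ) := by
  have hn : n ≠ 0 := by rintro rfl; simp [Complex.ext_iff] at h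
  have hratio : (tan θ - I) ^ n = (-1) ^ n * I * (tan θ + I) ^ n := by
    rw [tan_sub_I_eq (cos_ne_zero_of_exp_eq_I h), mul_pow, neg_pow, ← exp_nat_mul,
      show n * (2 * θ * I) = 2 * n * θ * I by ring, h]
  rw [IsRoot.def, eval_dualBinomial, mul_one]
  rcases n.even_or_odd with he | ho
  · have hodd : Odd (n - 1) := Nat.Even.sub_odd (Nat.one_le_iff_ne_zero.mpr hn) he odd_one
    rw [hodd.neg_one_pow, show -1 * tan θ + I = -(tan θ - I) by ring,
      show -1 * tan θ - I = -(tan θ + I) by ring, he.neg_pow, he.neg_pow, hratio, he.neg_one_pow]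
    linear_combination (tan θ + I) ^ n * I_sq / 2
  · have hev : Even (n - 1) := Nat.Odd.sub_odd ho odd_one
    rw [hev.neg_one_pow, one_mul, hratio, ho.neg_one_pow]
    linear_combination (tan θ + I) ^ n * I_sq / 2

noncomputable def dualAngle (n k : ℕ) : ℝ := Real.pi * (4 * k + 1) / (4 * n)

theorem exp_two_mul_dualAngle_mul_I {n : ℕ} (hn : n ≠ 0) (k : ℕ) :
    exp (2 * n * (dualAngle n k : ℂ) * I) = I := by
  have hangle : 2 * n * (dualAngle n k : ℂ) * I = Real.pi / 2 * I + k * (2 * Real.pi * I) := by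
    push_cast [dualAngle]; field_simp; ring
  rw [hangle, exp_add, exp_pi_div_two_mul_I, exp_nat_mul_two_pi_mul_I, mul_one]

theorem injOn_exp_two_mul_dualAngle_mul_I (n : ℕ) :
    Set.InjOn (fun k : ℕ ↦ exp (2 * (dualAngle n k : ℂ) * I)) (Finset.Icc 1 n) := by
  intro k₁ hk₁ k₂ hk₂ h
  simp only [Finset.coe_Icc, Set.mem_Icc] at hk₁ hk₂
  obtain ⟨m, hm⟩ := exp_eq_exp_iff_exists_int.mp h
  have hn : (n : ℂ) ≠ 0 := by norm_cast; omega
  push_cast [dualAngle] at hm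
  field_simp at hm
  have hdiff : (k₁ : ℤ) - k₂ = n * m := by
    have : (k₁ : ℂ) - k₂ = n * m := by linear_combination hm / 4
    exact_mod_cast this
  have := Int.eq_zero_of_abs_lt_dvd ⟨m, hdiff⟩ (abs_lt.mpr ⟨by omega, by omega⟩)
  omega

theorem dualBinomialRoot_eq (n : ℕ) (a : ℂ) (k : ℕ) :
    dualBinomialRoot n a k = (-1) ^ (n - 1) * a * tan (dualAngle n k) := by
  rw [dualBinomialRoot, ofReal_tan, dualAngle]

theorem isRoot_dualBinomial {n : ℕ} (hn : n ≠ 0) (a : ℂ) (k : ℕ) :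
    (dualBinomial n a).IsRoot (dualBinomialRoot n a k) := by
  rw [IsRoot.def, dualBinomialRoot_eq, mul_comm ((-1 : ℂ) ^ (n - 1)) a, mul_assoc,
    eval_mul_dualBinomial,
    (isRoot_dualBinomial_one_tan (exp_two_mul_dualAngle_mul_I hn k)).eq_zero, mul_zero]

theorem injOn_dualBinomialRoot (n : ℕ) {a : ℂ} (ha : a ≠ 0) :
    Set.InjOn (dualBinomialRoot n a) (Finset.Icc 1 n) := by
  intro k₁ hk₁ k₂ hk₂ h
  have hn : n ≠ 0 := by simp only [Finset.coe_Icc, Set.mem_Icc] at hk₁; omega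
  have hcos (k : ℕ) : cos (dualAngle n k) ≠ 0 :=
    cos_ne_zero_of_exp_eq_I (exp_two_mul_dualAngle_mul_I hn k)
  rw [dualBinomialRoot_eq, dualBinomialRoot_eq] at h
  have htan := mul_left_cancel₀ (mul_ne_zero (pow_ne_zero _ (neg_ne_zero.mpr one_ne_zero)) ha) h
  exact injOn_exp_two_mul_dualAngle_mul_I n hk₁ hk₂
    (exp_two_mul_mul_I_eq_of_tan_eq (hcos k₁) (hcos k₂) htan)

theorem roots_dualBinomial (n : ℕ) {a : ℂ} (ha : a ≠ 0) :
    (dualBinomial n a).roots = ((Finset.Icc 1 n).image (dualBinomialRoot n a)).val := by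
  refine roots_eq_of_natDegree_le_card_of_ne_zero ?_ ?_ (monic_dualBinomial n a).ne_zero
  · simp only [Finset.mem_image, Finset.mem_Icc]
    rintro _ ⟨k, hk, rfl⟩
    exact isRoot_dualBinomial (by omega) a k
  · rw [Finset.card_image_of_injOn (injOn_dualBinomialRoot n ha), Nat.card_Icc,
      Nat.add_sub_cancel]
    exact natDegree_dualBinomial_le n a

theorem im_dualBinomialRoot_ofReal (n : ℕ) (r : ℝ) (k : ℕ) :
    (dualBinomialRoot n r k).im = 0 := by
  rw [dualBinomialRoot]
  norm_cast

theorem dual_of_binomial_roots_general (n : ℕ) (a : ℂ) (ha : a ≠ 0) :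
    (∀ k1 ∈ Finset.Icc 1 n, ∀ k2 ∈ Finset.Icc 1 n,
        dualBinomialRoot n a k1 = dualBinomialRoot n a k2 → k1 = k2) ∧
    (∀ z : ℂ,
        Polynomial.eval z (∑ k ∈ Finset.range (n + 1),
            Polynomial.C ((-1 : ℂ) ^ (k * (k + 1) / 2) * (n.choose k : ℂ) * a ^ k) *
              Polynomial.X ^ (n - k)) = 0 ↔
          ∃ k ∈ Finset.Icc 1 n, z = dualBinomialRoot n a k) ∧
    (a.im = 0 ∧ 0 < a.re → ∀ k ∈ Finset.Icc 1 n, (dualBinomialRoot n a k).im = 0) := by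
  refine ⟨fun k₁ hk₁ k₂ hk₂ ↦ injOn_dualBinomialRoot n ha hk₁ hk₂, fun z ↦ ?_, ?_⟩
  · change (dualBinomial n a).IsRoot z ↔ _
    rw [← mem_roots (monic_dualBinomial n a).ne_zero, roots_dualBinomial n ha, Finset.mem_val,
      Finset.mem_image]
    simp only [eq_comm]
  · rintro ⟨him, -⟩ k -
    rw [← re_add_im a, him, ofReal_zero, zero_mul, add_zero]
    exact im_dualBinomialRoot_ofReal n a.re k

/-- For `n ≥ 1` and `a ≠ 0`, the polynomial
`q(z) = Σ_{k=0}^n (-1)^{k(k+1)/2} C(n,k) a^k z^{n-k}` (the dual of `(z+a)^n`) has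
exactly the `n` pairwise distinct roots `μ_k = (-1)^{n-1} a·tan(π(4k+1)/(4n))`,
`k = 1, …, n`; in particular, if `a` is a positive real number, these are `n` distinct
real roots. -/
theorem dual_of_binomial_roots (n : ℕ) (hn : 1 ≤ n) (a : ℂ) (ha : a ≠ 0) :
    (∀ k1 ∈ Finset.Icc 1 n, ∀ k2 ∈ Finset.Icc 1 n,
        dualBinomialRoot n a k1 = dualBinomialRoot n a k2 → k1 = k2) ∧
    (∀ z : ℂ,
        Polynomial.eval z (∑ k ∈ Finset.range (n + 1),
            Polynomial.C ((-1 : ℂ) ^ (k * (k + 1) / 2) * (n.choose k : ℂ) * a ^ k) *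
              Polynomial.X ^ (n - k)) = 0 ↔
          ∃ k ∈ Finset.Icc 1 n, z = dualBinomialRoot n a k) ∧
    (a.im = 0 ∧ 0 < a.re → ∀ k ∈ Finset.Icc 1 n, (dualBinomialRoot n a k).im = 0) :=
  dual_of_binomial_roots_general n a ha
end

section
/- Let p be a real polynomial of degree n ≥ 2 that is self-interlacing of kind I. Then for every k = 1, …, n−1, the k-th derivative p^{(k)} is also self-interlacing of kind I (as a polynomial of degree n−k). -/
open Polynomial

/-!
Rolle's theorem puts one root `ν_i` of `p'` strictly between consecutive roots of `p`, so the
roots of `p'` are real and simple. Up to sorting them by decreasing absolute value, `p'` is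
self-interlacing iff every root `y` of `p'` has sign `(-1) ^ #{j | |y| < |ν_j|}`, and this sign
is read off the sign of `p'(-y)` in two ways. The factorisation of `p'` gives
`(-1) ^ #{j | -y < ν_j}`. On the other side, `p'(y) = 0` turns the logarithmic derivative at `-y`
into `p'(-y) = 2 p(-y) ∑ λ_k / (y² - λ_k²)`, an alternating sum of reciprocals of the
increasing sequence `(y² - λ_k²) / |λ_k|`, whose sign is `(-1)` to the number of its negative
terms (when `-y` is itself a root of `p`, `p'(-y)` is instead a product of differences of roots).
Comparing the two answers modulo 2 gives the required sign.
-/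

open Finset

lemma neg_one_pow_mul_eq_abs {x : ℝ} {k : ℕ} (h : 0 < (-1 : ℝ) ^ k * x) :
    (-1 : ℝ) ^ k * x = |x| := by
  rw [← abs_of_pos h, abs_mul, abs_pow, abs_neg, abs_one, one_pow, one_mul]

lemma neg_one_pow_mul_abs_eq {x : ℝ} {k : ℕ} (h : 0 < (-1 : ℝ) ^ k * x) :
    (-1 : ℝ) ^ k * |x| = x := by
  rw [← neg_one_pow_mul_eq_abs h, ← mul_assoc, ← mul_pow, neg_one_mul, neg_neg, one_pow, one_mul]

lemma neg_one_pow_mul_pos_iff {x : ℝ} (hx : x ≠ 0) (e : ℕ) :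
    0 < (-1 : ℝ) ^ e * x ↔ (e % 2 = 0 ↔ 0 < x) := by
  rw [neg_one_pow_eq_pow_mod_two]
  rcases Nat.mod_two_eq_zero_or_one e with he | he <;> rw [he]
  · simp
  · simp only [pow_one, neg_one_mul, neg_pos, one_ne_zero, false_iff, not_lt]
    exact hx.le_iff_lt.symm

lemma mod_two_eq_of_neg_one_pow_mul_pos {A : ℝ} {a b : ℕ} (ha : 0 < (-1 : ℝ) ^ a * A)
    (hb : 0 < (-1 : ℝ) ^ b * A) : a % 2 = b % 2 := by
  rw [neg_one_pow_eq_pow_mod_two] at ha hb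
  rcases Nat.mod_two_eq_zero_or_one a with h | h <;>
    rcases Nat.mod_two_eq_zero_or_one b with h' | h' <;> simp_all <;> linarith

lemma neg_one_pow_mul_pos_of_mod_two_eq {A : ℝ} {a b : ℕ} (ha : 0 < (-1 : ℝ) ^ a * A)
    (hab : a % 2 = b % 2) : 0 < (-1 : ℝ) ^ b * A := by
  rwa [neg_one_pow_eq_pow_mod_two, ← hab, ← neg_one_pow_eq_pow_mod_two]

lemma neg_one_pow_card_mul_prod_sub_pos {ι : Type*} (s : Finset ι) (r : ι → ℝ) {y : ℝ}
    (hy : ∀ i ∈ s, r i ≠ y) : 0 < (-1 : ℝ) ^ #{i ∈ s | y < r i} * ∏ i ∈ s, (y - r i) := by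
  induction s using Finset.cons_induction with
  | empty => simp
  | cons a s ha ih =>
    have ih := ih fun i hi => hy i (mem_cons_of_mem hi)
    rw [filter_cons, prod_cons]
    rcases (hy a (mem_cons_self a s)).lt_or_gt with h | h
    · rw [if_neg h.not_gt]
      nlinarith [sub_pos.2 h]
    · rw [if_pos h, card_cons, pow_succ]
      nlinarith [sub_neg.2 h]

lemma card_filter_comp_equiv {α β : Type*} [Fintype α] [Fintype β] (e : α ≃ β) (p : β → Prop)
    [DecidablePred p] : #{a | p (e a)} = #{b | p b} := by
  simp only [card_filter]
  exact Equiv.sum_comp e fun b => if p b then 1 else 0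

lemma card_abs_lt_eq_of_strictAnti {n : ℕ} {lam : Fin n → ℝ}
    (habs : StrictAnti fun k => |lam k|) (k : Fin n) : #{j | |lam k| < |lam j|} = k := by
  rw [filter_congr fun j _ => habs.lt_iff_gt, filter_gt_eq_Iio, Fin.card_Iio]

lemma card_lt_add_card_neg_lt_add_card_abs_lt_add_card_mod_two {ι : Type*} (s : Finset ι)
    (r : ι → ℝ) {x : ℝ} (hx : ∀ i ∈ s, r i ≠ x ∧ r i ≠ -x) :
    (#{i ∈ s | x < r i} + #{i ∈ s | -x < r i} + #{i ∈ s | |x| < |r i|} + #s) % 2 = 0 := by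
  induction s using Finset.cons_induction with
  | empty => simp
  | cons a s ha ih =>
    have ih := ih fun i hi => hx i (mem_cons_of_mem hi)
    obtain ⟨h₁, h₂⟩ := hx a (mem_cons_self a s)
    simp only [filter_cons, apply_ite card, card_cons]
    -- if `|x| < |r a|` then `x < r a ↔ -x < r a`, otherwise exactly one of the two holds
    rcases lt_or_gt_of_ne h₁ with h₁ | h₁ <;> rcases lt_or_gt_of_ne h₂ with h₂ | h₂ <;>
      cases abs_cases x <;> cases abs_cases (r a) <;> split_ifs <;>
      first | omega | (exfalso; linarith)

lemma neg_one_pow_card_abs_lt_mul_pos_iff {ι : Type*} [Fintype ι] [DecidableEq ι]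
    (r : ι → ℝ) {a : ι} (hneg : ∀ j, r j ≠ -r a) (hinj : ∀ j ≠ a, r j ≠ r a) :
    0 < (-1 : ℝ) ^ #{j | |r a| < |r j|} * r a ↔
      (#{j | r a < r j} + #{j | -r a < r j} + Fintype.card ι) % 2 = 0 := by
  have h := card_lt_add_card_neg_lt_add_card_abs_lt_add_card_mod_two (univ.erase a) r
    (x := r a) fun j hj => ⟨hinj j (ne_of_mem_erase hj), hneg j⟩
  have hcard : ∀ (p : ι → Prop) [DecidablePred p],
      #{j | p j} = #{j ∈ univ.erase a | p j} + if p a then 1 else 0 := by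
    intro p _
    rw [filter_erase]
    by_cases hp : p a
    · rw [if_pos hp, card_erase_add_one (mem_filter.2 ⟨mem_univ a, hp⟩)]
    · rw [if_neg hp, add_zero, erase_eq_of_notMem fun h => hp (mem_filter.1 h).2]
  have hra : r a ≠ 0 := fun h0 => hneg a (by rw [h0, neg_zero])
  have hι : 0 < Fintype.card ι := Fintype.card_pos_iff.2 ⟨a⟩
  rw [hcard (r a < r ·), hcard (-r a < r ·), hcard (|r a| < |r ·|), neg_one_pow_mul_pos_iff hra]
  rw [card_erase_of_mem (mem_univ a), card_univ] at h
  simp only [lt_irrefl, if_false, add_zero, neg_lt_self_iff]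
  split_ifs with hr <;> simp only [hr, iff_true, iff_false] <;> omega

lemma StrictMono.sum_neg_one_pow_div_sign_and_le {n : ℕ} {s : Fin (n + 1) → ℝ} (hs : StrictMono s)
    (h0 : ∀ k, s k ≠ 0) :
    0 < (-1 : ℝ) ^ #{k | s k < 0} * ∑ k : Fin _, (-1 : ℝ) ^ (k : ℕ) / s k ∧
      (#{k | s k < 0} = 0 ∨ Odd #{k | s k < 0} →
        ∑ k : Fin _, (-1 : ℝ) ^ (k : ℕ) / s k ≤ 1 / s 0) := by
  induction n with
  | zero =>
    rw [Fin.card_filter_univ_succ', Fin.sum_univ_one]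
    rcases (h0 0).lt_or_gt with h | h
    · simp [h]
    · simp [h.not_gt, h]
  | succ n ih =>
    have ih := ih (hs.comp Fin.strictMono_succ) (fun k => h0 _)
    simp only [Function.comp_apply] at ih
    obtain ⟨ih₁, ih₂⟩ := ih
    rw [Fin.card_filter_univ_succ', add_comm]
    set S := ∑ k : Fin (n + 1), (-1 : ℝ) ^ (k : ℕ) / s k.succ
    set c := #{k : Fin (n + 1) | s k.succ < 0}
    have hsum : ∑ k : Fin _, (-1 : ℝ) ^ (k : ℕ) / s k = 1 / s 0 - S := by
      rw [Fin.sum_univ_succ, Fin.val_zero, pow_zero, sub_eq_add_neg, ← sum_neg_distrib]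
      congr 1
      refine sum_congr rfl fun k _ => ?_
      rw [Fin.val_succ, pow_succ]
      ring
    rw [hsum]
    have h01 : s 0 < s (Fin.succ 0) := hs (Fin.succ_pos 0)
    rcases (h0 0).lt_or_gt with hneg | hpos
    · simp only [hneg, if_true, pow_succ]
      have h0inv : 1 / s 0 < 0 := one_div_neg.2 hneg
      rcases Nat.even_or_odd c with he | ho
      · rw [he.neg_one_pow, one_mul] at ih₁ ⊢
        exact ⟨by linarith, fun _ => by linarith⟩
      · rw [ho.neg_one_pow] at ih₁ ⊢
        have h1 : s (Fin.succ 0) < 0 := by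
          obtain ⟨k, hk⟩ := card_pos.1 ho.pos
          exact (hs.monotone (Fin.succ_le_succ_iff.2 (Fin.zero_le k))).trans_lt (mem_filter.1 hk).2
        have := ih₂ (Or.inr ho)
        have := one_div_lt_one_div_of_neg_of_lt h1 h01
        refine ⟨by linarith, fun h => ?_⟩
        rcases h with h | h
        · omega
        · exact absurd (ho.add_one) (Nat.not_even_iff_odd.2 h)
    · have hc : c = 0 := by
        rw [card_eq_zero, filter_eq_empty_iff]
        exact fun k _ => (hpos.trans (hs (Fin.succ_pos k))).not_gt
      rw [hc] at ih₁ ih₂ ⊢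
      have := ih₂ (Or.inl rfl)
      have := one_div_lt_one_div_of_lt hpos h01
      simp only [hpos.not_gt, if_false, add_zero, pow_zero, one_mul] at ih₁ ⊢
      exact ⟨by linarith, fun _ => by linarith⟩

lemma neg_one_pow_card_abs_lt_mul_sum_div_sq_sub_sq_pos {n : ℕ} {lam : Fin (n + 1) → ℝ}
    (habs : StrictAnti fun k => |lam k|) (hsign : ∀ k : Fin (n + 1), 0 < (-1 : ℝ) ^ (k : ℕ) * lam k)
    {y : ℝ} (hy : ∀ k, |lam k| ≠ |y|) :
    0 < (-1 : ℝ) ^ #{k | |y| < |lam k|} * ∑ k, lam k / (y ^ 2 - lam k ^ 2) := by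
  have hlam : ∀ k, 0 < |lam k| := fun k => by
    rw [← neg_one_pow_mul_eq_abs (hsign k)]; exact hsign k
  set s : Fin (n + 1) → ℝ := fun k => (y ^ 2 - |lam k| ^ 2) / |lam k|
  have hs : StrictMono s := fun j k hjk => by
    have hjk := habs hjk
    have : y ^ 2 / |lam j| ≤ y ^ 2 / |lam k| :=
      div_le_div_of_nonneg_left (sq_nonneg y) (hlam k) hjk.le
    simp only [s, sub_div, sq (|lam _|), mul_div_cancel_right₀ _ (hlam _).ne']
    linarith
  have hs_neg : ∀ k, s k < 0 ↔ |y| < |lam k| := fun k => by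
    rw [div_lt_iff₀ (hlam k), zero_mul, sub_neg, ← sq_abs y,
      sq_lt_sq₀ (abs_nonneg _) (abs_nonneg _)]
  have hs0 : ∀ k, s k ≠ 0 := fun k => by
    refine div_ne_zero (sub_ne_zero.2 fun h => hy k ?_) (hlam k).ne'
    rwa [← sq_abs y, sq_eq_sq₀ (abs_nonneg _) (abs_nonneg _), eq_comm] at h
  have hterm : ∀ k : Fin (n + 1), (-1 : ℝ) ^ (k : ℕ) / s k = lam k / (y ^ 2 - lam k ^ 2) := by
    intro k
    rw [div_div_eq_mul_div, neg_one_pow_mul_abs_eq (hsign k), sq_abs]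
  simpa only [hs_neg, hterm] using (hs.sum_neg_one_pow_div_sign_and_le hs0).1

lemma eval_derivative_prod_X_sub_C {K ι : Type*} [CommRing K] [DecidableEq ι] (s : Finset ι)
    (r : ι → K) (z : K) :
    eval z (derivative (∏ i ∈ s, (X - C (r i)))) = ∑ a ∈ s, ∏ i ∈ s.erase a, (z - r i) := by
  simp [derivative_prod_finset, eval_finsetSum, eval_prod]

lemma eval_derivative_prod_X_sub_C_eq_mul_sum_inv {K ι : Type*} [Field K] [DecidableEq ι]
    (s : Finset ι) (r : ι → K) {z : K} (hz : ∀ i ∈ s, r i ≠ z) :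
    eval z (derivative (∏ i ∈ s, (X - C (r i)))) =
      eval z (∏ i ∈ s, (X - C (r i))) * ∑ i ∈ s, (z - r i)⁻¹ := by
  rw [eval_derivative_prod_X_sub_C, mul_sum]
  refine sum_congr rfl fun a ha => ?_
  rw [eval_prod, ← mul_prod_erase s _ ha]
  simp only [eval_sub, eval_X, eval_C]
  rw [mul_comm (z - r a), mul_assoc, mul_inv_cancel₀ (sub_ne_zero.2 (hz a ha).symm), mul_one]

lemma eval_derivative_prod_X_sub_C_at {K ι : Type*} [CommRing K] [Fintype ι] [DecidableEq ι]
    (r : ι → K) (a : ι) :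
    eval (r a) (derivative (∏ i, (X - C (r i)))) = ∏ i ∈ univ.erase a, (r a - r i) := by
  rw [eval_derivative_prod_X_sub_C, sum_eq_single a]
  · exact fun b _ hb => prod_eq_zero (mem_erase.2 ⟨Ne.symm hb, mem_univ a⟩) (sub_self _)
  · exact fun h => (h (mem_univ a)).elim

lemma eq_C_leadingCoeff_mul_prod_X_sub_C {R : Type*} [CommRing R] [IsDomain R] {p : R[X]}
    {n : ℕ} {ν : Fin n → R} (hν : Function.Injective ν) (hroot : ∀ i, p.IsRoot (ν i))
    (hdeg : p.natDegree = n) : p = C p.leadingCoeff * ∏ i, (X - C (ν i)) := by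
  rcases eq_or_ne p 0 with rfl | hp
  · simp
  have hroots : p.roots = univ.val.map ν := by
    refine (Multiset.eq_of_le_of_card_le ?_ ?_).symm
    · rw [Multiset.le_iff_subset (univ.nodup.map hν)]
      intro x hx
      obtain ⟨i, -, rfl⟩ := Multiset.mem_map.1 hx
      exact (mem_roots hp).2 (hroot i)
    · simpa [hdeg] using card_roots' p
  conv_lhs => rw [← C_leadingCoeff_mul_prod_multiset_X_sub_C (p := p) (by simp [hroots, hdeg])]
  rw [hroots, Multiset.map_map]
  rfl

lemma exists_strictMono_roots_derivative_interlacing {n : ℕ} {p : ℝ[X]} {r : Fin (n + 1) → ℝ}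
    (hr : Function.Injective r) (hroot : ∀ k, p.IsRoot (r k)) :
    ∃ ν : Fin n → ℝ, StrictMono ν ∧ (∀ i, (derivative p).IsRoot (ν i)) ∧ (∀ i k, r k ≠ ν i) ∧
      ∀ i, #{k | ν i < r k} = #{j | ν i < ν j} + 1 := by
  set σ := Tuple.sort r
  set d := r ∘ σ
  have hd : StrictMono d := (Tuple.monotone_sort r).strictMono_of_injective (hr.comp σ.injective)
  have hrolle : ∀ i : Fin n, ∃ y ∈ Set.Ioo (d i.castSucc) (d i.succ), (derivative p).IsRoot y := by
    intro i
    obtain ⟨y, hy, hy'⟩ := exists_deriv_eq_zero (hd Fin.castSucc_lt_succ) p.continuousOn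
      (by simp only [d, Function.comp_apply, (hroot _).eq_zero])
    exact ⟨y, hy, by rwa [IsRoot, ← p.deriv]⟩
  choose ν hν hνroot using hrolle
  have hνd : ∀ i k, ν i < d k ↔ i.succ ≤ k := fun i k => by
    constructor
    · intro h
      by_contra! hk
      exact ((hd.monotone (Fin.le_castSucc_iff.2 hk)).trans_lt (hν i).1).not_gt h
    · exact fun h => (hν i).2.trans_le (hd.monotone h)
  have hmono : StrictMono ν := fun i j hij =>
    ((hνd i j.castSucc).2 (Fin.succ_le_castSucc_iff.2 hij)).trans (hν j).1
  refine ⟨ν, hmono, hνroot, fun i k h => ?_, fun i => ?_⟩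
  · have hk : r k = d (σ.symm k) := by simp [d]
    rcases le_or_gt i.succ (σ.symm k) with h' | h'
    · exact ((hνd i _).2 h').ne (hk ▸ h.symm)
    · have := (hd.monotone (Fin.le_castSucc_iff.2 h')).trans_lt (hν i).1
      rw [← hk, h] at this
      exact lt_irrefl _ this
  · have hperm : #{k | ν i < r k} = #{k | ν i < d k} := (card_filter_comp_equiv σ (ν i < r ·)).symm
    rw [hperm, filter_congr fun k _ => hνd i k, filter_congr fun j _ => hmono.lt_iff_lt,
      filter_le_eq_Ici, filter_lt_eq_Ioi, Fin.card_Ici, Fin.card_Ioi, Fin.val_succ]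
    omega

lemma neg_one_pow_mul_eval_neg_derivative_pos_of_ne_neg {n : ℕ} {lam : Fin (n + 1) → ℝ}
    (habs : StrictAnti fun k => |lam k|) (hsign : ∀ k : Fin (n + 1), 0 < (-1 : ℝ) ^ (k : ℕ) * lam k)
    {y : ℝ} (hy : (derivative (∏ k, (X - C (lam k)))).IsRoot y) (hyr : ∀ k, lam k ≠ y)
    (hyr' : ∀ k, lam k ≠ -y) :
    0 < (-1 : ℝ) ^ (n + 1 + #{k | y < lam k}) * eval (-y) (derivative (∏ k, (X - C (lam k)))) := by
  set P := ∏ k, (X - C (lam k))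
  have hPy : eval y P ≠ 0 := by
    simpa [P, eval_prod, prod_eq_zero_iff, sub_eq_zero] using fun k => (hyr k).symm
  have hsum : ∑ k, (y - lam k)⁻¹ = 0 := by
    have := hy.eq_zero
    rw [eval_derivative_prod_X_sub_C_eq_mul_sum_inv _ _ fun k _ => hyr k] at this
    exact (mul_eq_zero.1 this).resolve_left hPy
  have hterm : ∀ k, (-y - lam k)⁻¹ + (y - lam k)⁻¹ = 2 * (lam k / (y ^ 2 - lam k ^ 2)) := by
    intro k
    have h₁ : y - lam k ≠ 0 := sub_ne_zero.2 (hyr k).symm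
    have h₂ : -y - lam k ≠ 0 := sub_ne_zero.2 (hyr' k).symm
    have h₃ : y ^ 2 - lam k ^ 2 ≠ 0 := by
      rw [sq_sub_sq]; exact mul_ne_zero (by contrapose! h₂; linarith) h₁
    field_simp
    ring
  have heval : eval (-y) (derivative P) = 2 * eval (-y) P * ∑ k, lam k / (y ^ 2 - lam k ^ 2) := by
    rw [eval_derivative_prod_X_sub_C_eq_mul_sum_inv _ _ fun k _ => hyr' k,
      ← add_zero (∑ k, (-y - lam k)⁻¹), ← hsum, ← sum_add_distrib,
      sum_congr rfl fun k _ => hterm k, ← mul_sum]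
    ring
  have hP : 0 < (-1 : ℝ) ^ #{k | -y < lam k} * eval (-y) P := by
    simpa [P, eval_prod] using neg_one_pow_card_mul_prod_sub_pos univ lam fun k _ => hyr' k
  have hW := neg_one_pow_card_abs_lt_mul_sum_div_sq_sub_sq_pos habs hsign (y := y) fun k h =>
    (abs_eq_abs.1 h).elim (hyr k) (hyr' k)
  have hprod : 0 < (-1 : ℝ) ^ (#{k | -y < lam k} + #{k | |y| < |lam k|}) *
      eval (-y) (derivative P) := by
    rw [heval, pow_add]
    nlinarith [mul_pos hP hW]
  have hpar := card_lt_add_card_neg_lt_add_card_abs_lt_add_card_mod_two univ lam (x := y)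
    fun k _ => ⟨hyr k, hyr' k⟩
  simp only [card_univ, Fintype.card_fin] at hpar
  exact neg_one_pow_mul_pos_of_mod_two_eq hprod (by omega)

lemma neg_one_pow_mul_eval_neg_derivative_pos_of_eq_neg {n : ℕ} {lam : Fin (n + 1) → ℝ}
    (habs : StrictAnti fun k => |lam k|) (hsign : ∀ k : Fin (n + 1), 0 < (-1 : ℝ) ^ (k : ℕ) * lam k)
    {y : ℝ} (hyr : ∀ k, lam k ≠ y) {k₀ : Fin (n + 1)} (hk₀ : lam k₀ = -y) :
    0 < (-1 : ℝ) ^ (n + 1 + #{k | y < lam k}) * eval (-y) (derivative (∏ k, (X - C (lam k)))) := by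
  have hinj : Function.Injective lam := fun i j h => habs.injective (by simp only [h])
  have hprod : 0 < (-1 : ℝ) ^ #{k | -y < lam k} *
      eval (-y) (derivative (∏ k, (X - C (lam k)))) := by
    have := neg_one_pow_card_mul_prod_sub_pos (univ.erase k₀) lam (y := lam k₀)
      fun k hk => hinj.ne (ne_of_mem_erase hk)
    rwa [filter_erase, erase_eq_of_notMem (by simp), ← eval_derivative_prod_X_sub_C_at, hk₀] at this
  have hpar := (neg_one_pow_card_abs_lt_mul_pos_iff lam (a := k₀)
    (fun j => by rw [hk₀, neg_neg]; exact hyr j) fun j hj => hinj.ne hj).1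
    (by rw [card_abs_lt_eq_of_strictAnti habs]; exact hsign k₀)
  simp only [hk₀, neg_neg, Fintype.card_fin] at hpar
  exact neg_one_pow_mul_pos_of_mod_two_eq hprod (by omega)

lemma neg_one_pow_mul_eval_neg_derivative_pos {n : ℕ} {lam : Fin (n + 1) → ℝ}
    (habs : StrictAnti fun k => |lam k|) (hsign : ∀ k : Fin (n + 1), 0 < (-1 : ℝ) ^ (k : ℕ) * lam k)
    {y : ℝ} (hy : (derivative (∏ k, (X - C (lam k)))).IsRoot y) (hyr : ∀ k, lam k ≠ y) :
    0 < (-1 : ℝ) ^ (n + 1 + #{k | y < lam k}) * eval (-y) (derivative (∏ k, (X - C (lam k)))) := by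
  by_cases h : ∃ k₀, lam k₀ = -y
  · obtain ⟨k₀, hk₀⟩ := h
    exact neg_one_pow_mul_eval_neg_derivative_pos_of_eq_neg habs hsign hyr hk₀
  · push Not at h
    exact neg_one_pow_mul_eval_neg_derivative_pos_of_ne_neg habs hsign hy hyr h

theorem exists_derivative_prod_X_sub_C_eq {n : ℕ} {lam : Fin (n + 1) → ℝ}
    (habs : StrictAnti fun k => |lam k|)
    (hsign : ∀ k : Fin (n + 1), 0 < (-1 : ℝ) ^ (k : ℕ) * lam k) :
    ∃ ν : Fin n → ℝ, derivative (∏ k, (X - C (lam k))) = C ((n : ℝ) + 1) * ∏ i, (X - C (ν i)) ∧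
      Function.Injective (fun i => |ν i|) ∧ ∀ i, 0 < (-1 : ℝ) ^ #{j | |ν i| < |ν j|} * ν i := by
  set P := ∏ k, (X - C (lam k))
  have hinj : Function.Injective lam := fun i j h => habs.injective (by simp only [h])
  obtain ⟨ν, hmono, hroot, hne, hcount⟩ := exists_strictMono_roots_derivative_interlacing hinj
    (p := P) fun k => by
      simp only [IsRoot, P, eval_prod, eval_sub, eval_X, eval_C]
      exact prod_eq_zero (mem_univ k) (sub_self _)
  have hP : P.natDegree = n + 1 := by simp [P]
  have hfac : derivative P = C ((n : ℝ) + 1) * ∏ i, (X - C (ν i)) := by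
    have h := eq_C_leadingCoeff_mul_prod_X_sub_C hmono.injective hroot (by simp [hP])
    rwa [leadingCoeff_derivative, hP, (monic_prod_X_sub_C lam univ).leadingCoeff, one_mul,
      Nat.cast_add_one] at h
  have hsign' : ∀ i,
      0 < (-1 : ℝ) ^ (n + 1 + (#{j | ν i < ν j} + 1)) * eval (-ν i) (derivative P) := by
    intro i
    rw [← hcount]
    exact neg_one_pow_mul_eval_neg_derivative_pos habs hsign (hroot i) (hne i)
  have hneg : ∀ i j, ν j ≠ -ν i := fun i j h => by
    have := hsign' i
    rw [← h, (hroot j).eq_zero, mul_zero] at this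
    exact lt_irrefl _ this
  refine ⟨ν, hfac, fun i j h => hmono.injective ?_, fun i => ?_⟩
  · exact (abs_eq_abs.1 h).resolve_right (fun h' => hneg j i h')
  · have hprod : 0 < (-1 : ℝ) ^ #{j | -ν i < ν j} * eval (-ν i) (derivative P) := by
      have := neg_one_pow_card_mul_prod_sub_pos univ ν fun j _ => hneg i j
      rw [hfac, eval_mul, eval_C, eval_prod]
      simp only [eval_sub, eval_X, eval_C]
      nlinarith
    have := mod_two_eq_of_neg_one_pow_mul_pos (hsign' i) hprod
    refine (neg_one_pow_card_abs_lt_mul_pos_iff ν (hneg i) fun j hj => hmono.injective.ne hj).2 ?_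
    simp only [Fintype.card_fin]
    omega

theorem selfInterlacingI_C_mul_prod_X_sub_C {m : ℕ} {c : ℝ} (hc : c ≠ 0) {ν : Fin m → ℝ}
    (hinj : Function.Injective fun i => |ν i|)
    (hsign : ∀ i, 0 < (-1 : ℝ) ^ #{j | |ν i| < |ν j|} * ν i) :
    SelfInterlacingI (C c * ∏ i, (X - C (ν i))) := by
  have hdeg : (C c * ∏ i, (X - C (ν i))).natDegree = m := by simp [natDegree_C_mul hc]
  have hlc : (C c * ∏ i, (X - C (ν i))).leadingCoeff = c := by
    simp [(monic_prod_X_sub_C ν univ).leadingCoeff]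
  set τ := Tuple.sort fun i => -|ν i|
  have hτ : StrictAnti fun i => |ν (τ i)| := by
    have := (Tuple.monotone_sort fun i => -|ν i|).strictMono_of_injective
      ((neg_injective.comp hinj).comp τ.injective)
    exact fun i j hij => neg_lt_neg_iff.1 (this hij)
  have hτsign : ∀ i : Fin m, 0 < (-1 : ℝ) ^ (i : ℕ) * ν (τ i) := fun i => by
    have := hsign (τ i)
    rwa [← card_filter_comp_equiv τ, card_abs_lt_eq_of_strictAnti hτ] at this
  refine ⟨fun i => ν (τ (Fin.cast hdeg i)), ?_, fun i j hij => ?_,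
    fun i => hτsign (Fin.cast hdeg i)⟩
  · rw [hlc]
    congr 1
    exact (Fintype.prod_equiv ((finCongr hdeg).trans τ) (fun i => X - C (ν (τ (Fin.cast hdeg i))))
      (fun i => X - C (ν i)) fun i => rfl).symm
  · have h := hτ (show Fin.cast hdeg i < Fin.cast hdeg j from hij)
    simp only [← neg_one_pow_mul_eq_abs (hτsign _), Fin.val_cast] at h
    exact h

theorem selfInterlacingI_of_natDegree_eq_zero {p : ℝ[X]} (hp : p.natDegree = 0) :
    SelfInterlacingI p := by
  have : IsEmpty (Fin p.natDegree) := by rw [hp]; infer_instance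
  refine ⟨isEmptyElim, ?_, fun i => isEmptyElim i, isEmptyElim⟩
  rw [univ_eq_empty, prod_empty, mul_one, leadingCoeff, hp, ← eq_C_of_natDegree_eq_zero hp]

theorem SelfInterlacingI.exists_roots {p : ℝ[X]} (hp : SelfInterlacingI p) {n : ℕ}
    (hn : p.natDegree = n) :
    ∃ lam : Fin n → ℝ, p = C p.leadingCoeff * ∏ k, (X - C (lam k)) ∧
      (StrictAnti fun k => |lam k|) ∧ ∀ k : Fin n, 0 < (-1 : ℝ) ^ (k : ℕ) * lam k := by
  subst hn
  obtain ⟨lam, hfac, hanti, hpos⟩ := hp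
  exact ⟨lam, hfac, by simpa only [neg_one_pow_mul_eq_abs (hpos _)] using hanti, hpos⟩

theorem SelfInterlacingI.derivative {p : ℝ[X]} (hp : SelfInterlacingI p) :
    SelfInterlacingI (Polynomial.derivative p) := by
  rcases Nat.eq_zero_or_eq_succ_pred p.natDegree with h0 | hn
  · exact selfInterlacingI_of_natDegree_eq_zero (by simp [h0])
  obtain ⟨lam, hfac, habs, hsign⟩ := hp.exists_roots hn
  obtain ⟨ν, hder, hinj, hνsign⟩ := exists_derivative_prod_X_sub_C_eq habs hsign
  have hlc : p.leadingCoeff ≠ 0 := leadingCoeff_ne_zero.2 fun h => by simp [h] at hn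
  rw [hfac, derivative_C_mul, hder, ← mul_assoc, ← C_mul]
  exact selfInterlacingI_C_mul_prod_X_sub_C (mul_ne_zero hlc (by positivity)) hinj hνsign

theorem SelfInterlacingI.iterate_derivative {p : ℝ[X]} (hp : SelfInterlacingI p) (k : ℕ) :
    SelfInterlacingI (Polynomial.derivative^[k] p) := by
  induction k with
  | zero => exact hp
  | succ k ih => rw [Function.iterate_succ_apply']; exact ih.derivative

theorem selfInterlacing_derivative_general
    (n : ℕ) (p : Polynomial ℝ)
    (hsi : SelfInterlacingI p) :
    ∀ k, 1 ≤ k → k ≤ n - 1 → SelfInterlacingI (Polynomial.derivative^[k] p) :=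
  fun k _ _ => hsi.iterate_derivative k

/-- If `p` of degree `n ≥ 2` is self-interlacing of kind I, then so is every derivative
`p^{(k)}`, `k = 1, …, n - 1`. -/
theorem selfInterlacing_derivative
    (n : ℕ) (hn : 2 ≤ n) (p : Polynomial ℝ) (hdeg : p.natDegree = n)
    (hsi : SelfInterlacingI p) :
    ∀ k, 1 ≤ k → k ≤ n - 1 → SelfInterlacingI (Polynomial.derivative^[k] p) :=
  selfInterlacing_derivative_general n p hsi
end

section
/- Let a_0, a_1, …, a_n be arbitrary complex numbers (a_m = 0 for m < 0 or m > n), let p(z) = Σ_{k=0}^n a_k z^{n−k} and q(z) = Σ_{k=0}^n (−1)^{k(k+1)/2} a_k z^{n−k}, and let H_n(p) and H_n(q) be their n×n Hurwitz matrices. Then for every 1 ≤ m ≤ n and all row indices 1 ≤ i_1 < i_2 < ⋯ < i_m ≤ n and column indices 1 ≤ j_1 < j_2 < ⋯ < j_m ≤ n, the corresponding minors satisfy: det of the submatrix of H_n(q) with rows i_1,…,i_m and columns j_1,…,j_m equals (−1)^{Σ_{k=1}^m i_k(i_k−1)/2 + Σ_{k=1}^m j_k} times the det of the submatrix of H_n(p)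 with the same rows and columns. In particular, corresponding minors of H_n(p) and H_n(q) have equal absolute values. -/
/-!
The entry `b_{2j-i} = (-1)^{T(2j-i)} a_{2j-i}` of `H_n(q)`, with `T k = k(k+1)/2`, has
`T(2j-i) ≡ T(i-1) + j (mod 2)` whenever `a_{2j-i} ≠ 0`. Hence `H_n(q) = D H_n(p) D'` with diagonal
sign matrices `D = diag((-1)^{T(i-1)})`, `D' = diag((-1)^j)`, and every minor of `H_n(q)` is the
corresponding minor of `H_n(p)` times the selected diagonal signs.
-/

open Matrix

/-- The coefficient `b_s` of the dual polynomial; `toNat` is harmless as `a s = 0` for `s < 0`. -/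
def dualCoeff {R : Type*} [Ring R] (a : ℤ → R) (s : ℤ) : R :=
  (-1) ^ (s.toNat * (s.toNat + 1) / 2) * a s

/-- Writing `T k = k(k+1)/2`, the relation `s + i + 1 = 2j` gives
`T s + T i + j + s i = 2 j²`, and `s i` is even because `s + i` is odd. -/
theorem even_triangle_iff_of_add_add_one_eq_two_mul {s i j : ℕ} (h : s + i + 1 = 2 * j) :
    Even (s * (s + 1) / 2) ↔ Even ((i + 1) * i / 2 + j) := by
  have hs := Nat.two_mul_div_two_of_even (Nat.even_mul_succ_self s)
  have hi := Nat.two_mul_div_two_of_even (mul_comm i (i + 1) ▸ Nat.even_mul_succ_self i)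
  have hsum : s * (s + 1) / 2 + ((i + 1) * i / 2 + j) + s * i = 2 * (j * j) := by
    nlinarith
  have hsi : Even (s * i) := by
    rw [Nat.even_mul, Nat.even_iff, Nat.even_iff]
    omega
  exact Nat.even_add.mp ((Nat.even_add.mp (hsum ▸ even_two_mul (j * j))).mpr hsi)

theorem dualCoeff_two_mul_sub {R : Type*} [Ring R] {a : ℤ → R} (ha : ∀ s < 0, a s = 0)
    (i j : ℕ) :
    dualCoeff a (2 * ((j : ℤ) + 1) - ((i : ℤ) + 1)) =
      (-1) ^ ((i + 1) * i / 2) * ((-1) ^ (j + 1) * a (2 * ((j : ℤ) + 1) - ((i : ℤ) + 1))) := by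
  set s : ℤ := 2 * ((j : ℤ) + 1) - ((i : ℤ) + 1)
  rcases lt_or_ge s 0 with hneg | hnonneg
  · simp only [dualCoeff, ha s hneg, mul_zero]
  · have hsum : s.toNat + i + 1 = 2 * (j + 1) := by omega
    rw [dualCoeff, neg_one_pow_congr (even_triangle_iff_of_add_add_one_eq_two_mul hsum),
      pow_add, mul_assoc]

theorem det_dualCoeff_hurwitz_submatrix {R : Type*} [CommRing R] {ι : Type*} [Fintype ι]
    [DecidableEq ι] {a : ℤ → R} (ha : ∀ s < 0, a s = 0) (r c : ι → ℕ) :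
    det (of fun k l => dualCoeff a (2 * ((c l : ℤ) + 1) - ((r k : ℤ) + 1))) =
      (-1) ^ (∑ k, ((r k + 1) * r k / 2 + (c k + 1))) *
        det (of fun k l => a (2 * ((c l : ℤ) + 1) - ((r k : ℤ) + 1))) := by
  simp only [dualCoeff_two_mul_sub ha]
  refine (det_mul_column _ _).trans ((congrArg _ (det_mul_row _ _)).trans ?_)
  rw [Finset.prod_pow_eq_pow_sum, Finset.prod_pow_eq_pow_sum, ← mul_assoc, ← pow_add,
    ← Finset.sum_add_distrib]
  rfl

theorem hurwitz_minors_of_dual_general (n : ℕ) (a : ℤ → ℂ)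
    (ha : ∀ m : ℤ, (m < 0 ∨ (n : ℤ) < m) → a m = 0)
    (m : ℕ)
    (r c : Fin m → Fin n) :
    Matrix.det (Matrix.of fun k l : Fin m =>
        (-1 : ℂ) ^ ((2 * ((c l : ℤ) + 1) - ((r k : ℤ) + 1)).toNat *
            ((2 * ((c l : ℤ) + 1) - ((r k : ℤ) + 1)).toNat + 1) / 2) *
          a (2 * ((c l : ℤ) + 1) - ((r k : ℤ) + 1))) =
      (-1 : ℂ) ^ (∑ k : Fin m, (((r k : ℕ) + 1) * (r k : ℕ) / 2 + ((c k : ℕ) + 1))) *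
        Matrix.det (Matrix.of fun k l : Fin m =>
          a (2 * ((c l : ℤ) + 1) - ((r k : ℤ) + 1))) ∧
    ‖(Matrix.det (Matrix.of fun k l : Fin m =>
          (-1 : ℂ) ^ ((2 * ((c l : ℤ) + 1) - ((r k : ℤ) + 1)).toNat *
              ((2 * ((c l : ℤ) + 1) - ((r k : ℤ) + 1)).toNat + 1) / 2) *
            a (2 * ((c l : ℤ) + 1) - ((r k : ℤ) + 1))))‖ =
      ‖(Matrix.det (Matrix.of fun k l : Fin m =>
          a (2 * ((c l : ℤ) + 1) - ((r k : ℤ) + 1))))‖ := by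
  have hminor := det_dualCoeff_hurwitz_submatrix (fun s hs => ha s (Or.inl hs))
    (fun k => (r k : ℕ)) (fun l => (c l : ℕ))
  have hminor_norm := congrArg norm hminor
  rw [norm_mul, norm_pow, norm_neg, norm_one, one_pow, one_mul] at hminor_norm
  exact ⟨hminor, hminor_norm⟩

/-- Let `a : ℤ → ℂ` vanish outside `{0, …, n}`, let `b_m = (-1)^{m(m+1)/2} a_m` be the
coefficient sequence of the dual polynomial, and let `H_n(p)`, `H_n(q)` be the `n × n`
Hurwitz matrices with entries `a_{2j-i}`, `b_{2j-i}` (`1`-indexed).  For strictly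
increasing row indices `i_1 < ⋯ < i_m` and column indices `j_1 < ⋯ < j_m` (encoded by
strictly monotone `r c : Fin m → Fin n`, so `i_k = r k + 1`, `j_k = c k + 1`), the
corresponding minor of `H_n(q)` equals
`(-1)^{Σ i_k(i_k-1)/2 + Σ j_k}` times that of `H_n(p)`; in particular the two minors
have equal absolute values. -/
theorem hurwitz_minors_of_dual (n : ℕ) (hn : 1 ≤ n) (a : ℤ → ℂ)
    (ha : ∀ m : ℤ, (m < 0 ∨ (n : ℤ) < m) → a m = 0)
    (m : ℕ) (hm : 1 ≤ m)
    (r c : Fin m → Fin n) (hr : StrictMono r) (hc : StrictMono c) :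
    Matrix.det (Matrix.of fun k l : Fin m =>
        (-1 : ℂ) ^ ((2 * ((c l : ℤ) + 1) - ((r k : ℤ) + 1)).toNat *
            ((2 * ((c l : ℤ) + 1) - ((r k : ℤ) + 1)).toNat + 1) / 2) *
          a (2 * ((c l : ℤ) + 1) - ((r k : ℤ) + 1))) =
      (-1 : ℂ) ^ (∑ k : Fin m, (((r k : ℕ) + 1) * (r k : ℕ) / 2 + ((c k : ℕ) + 1))) *
        Matrix.det (Matrix.of fun k l : Fin m =>
          a (2 * ((c l : ℤ) + 1) - ((r k : ℤ) + 1))) ∧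
    ‖(Matrix.det (Matrix.of fun k l : Fin m =>
          (-1 : ℂ) ^ ((2 * ((c l : ℤ) + 1) - ((r k : ℤ) + 1)).toNat *
              ((2 * ((c l : ℤ) + 1) - ((r k : ℤ) + 1)).toNat + 1) / 2) *
            a (2 * ((c l : ℤ) + 1) - ((r k : ℤ) + 1))))‖ =
      ‖(Matrix.det (Matrix.of fun k l : Fin m =>
          a (2 * ((c l : ℤ) + 1) - ((r k : ℤ) + 1))))‖ :=
  hurwitz_minors_of_dual_general n a ha m r c
end

section
/- Let p be a real polynomial of degree n ≥ 1 with positive leading coefficient and let R(z) = (−1)^n p(−z)/p(z). Then p is Hurwitz stable if and only if (i) p(z) and p(−z) have no common complex root (so that R has exactly n poles), and (ii) for every complex z with Re z > 0 one has p(z) ≠ 0 and |R(z)| < 1, i.e., R maps the open right half-plane into the open unit disc. -/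
/-!
Over `ℂ`, `p(z) = c ∏ (z - r)` over the roots `r`, and `|p(-z)| = |p(-z̄)|` because `p` is real.
If every root lies in the open left half-plane, each root is strictly closer to the mirror
image `-z̄` of a point `z` of the open right half-plane than to `z` itself, so `|p(-z)| < |p(z)|`.
Conversely, a root in the closed right half-plane either makes `p(z)` vanish there or lies
on the imaginary axis, where `-z = z̄` is a common root of `p(z)` and `p(-z)`.
-/

open Polynomial

/-- A real polynomial is *Hurwitz stable* if all of its complex roots have
negative real part. -/
def HurwitzStable (p : Polynomial ℝ) : Prop :=
  ∀ z : ℂ, Polynomial.aeval z p = 0 → z.re < 0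

open ComplexConjugate

theorem Multiset.prod_map_lt_prod_map_of_nonneg {ι R : Type*} [CommSemiring R] [PartialOrder R]
    [IsStrictOrderedRing R] {s : Multiset ι} (hs : s ≠ 0) {f g : ι → R}
    (hf : ∀ i ∈ s, 0 ≤ f i) (hfg : ∀ i ∈ s, f i < g i) :
    (s.map f).prod < (s.map g).prod := by
  obtain ⟨a, ha⟩ := Multiset.exists_mem_of_ne_zero hs
  obtain ⟨t, rfl⟩ := Multiset.exists_cons_of_mem ha
  have hft : ∀ i ∈ t, 0 ≤ f i := fun i hi => hf i (Multiset.mem_cons_of_mem hi)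
  have hfgt : ∀ i ∈ t, f i < g i := fun i hi => hfg i (Multiset.mem_cons_of_mem hi)
  have hgt : 0 < (t.map g).prod :=
    Multiset.prod_pos fun _ hx => by
      obtain ⟨i, hi, rfl⟩ := Multiset.mem_map.mp hx
      exact (hft i hi).trans_lt (hfgt i hi)
  simp only [Multiset.map_cons, Multiset.prod_cons]
  calc f a * (t.map f).prod
      ≤ f a * (t.map g).prod :=
        mul_le_mul_of_nonneg_left
          (Multiset.prod_map_le_prod_map₀ f g hft fun i hi => (hfgt i hi).le) (hf a ha)
    _ < g a * (t.map g).prod := mul_lt_mul_of_pos_right (hfg a ha) hgt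

theorem Complex.norm_neg_conj_sub_lt_norm_sub {z r : ℂ} (hz : 0 < z.re) (hr : r.re < 0) :
    ‖-conj z - r‖ < ‖z - r‖ := by
  rw [← sq_lt_sq₀ (norm_nonneg _) (norm_nonneg _), Complex.sq_norm, Complex.sq_norm]
  -- the squared distances differ by `4 * z.re * r.re`
  simp only [Complex.normSq_apply, Complex.sub_re, Complex.sub_im, Complex.neg_re,
    Complex.neg_im, Complex.conj_re, Complex.conj_im]
  nlinarith [mul_pos hz (neg_pos.mpr hr)]

theorem Polynomial.norm_eval_neg_conj_lt_norm_eval {q : ℂ[X]} (hq : 0 < q.natDegree)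
    (hroots : ∀ r ∈ q.roots, r.re < 0) {z : ℂ} (hz : 0 < z.re) :
    ‖q.eval (-conj z)‖ < ‖q.eval z‖ := by
  have hsplit : q.Splits := IsAlgClosed.splits q
  have hq0 : q ≠ 0 := ne_zero_of_natDegree_gt hq
  have hroots_ne : q.roots ≠ 0 := by
    rw [← Multiset.card_pos, ← hsplit.natDegree_eq_card_roots]
    exact hq
  have norm_prod (s : Multiset ℂ) : ‖s.prod‖ = (s.map (‖·‖)).prod :=
    map_multiset_prod normHom s
  rw [hsplit.eval_eq_prod_roots, hsplit.eval_eq_prod_roots, norm_mul, norm_mul, norm_prod,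
    norm_prod, Multiset.map_map, Multiset.map_map]
  refine mul_lt_mul_of_pos_left ?_ (norm_pos_iff.mpr (leadingCoeff_ne_zero.mpr hq0))
  exact Multiset.prod_map_lt_prod_map_of_nonneg hroots_ne (fun _ _ => norm_nonneg _)
    fun r hr => Complex.norm_neg_conj_sub_lt_norm_sub hz (hroots r hr)

theorem HurwitzStable.norm_aeval_neg_lt_norm_aeval {p : ℝ[X]} (hp : HurwitzStable p)
    (hdeg : 0 < p.natDegree) {z : ℂ} (hz : 0 < z.re) :
    ‖aeval (-z) p‖ < ‖aeval z p‖ := by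
  have hroots : ∀ r ∈ (p.map (algebraMap ℝ ℂ)).roots, r.re < 0 := fun r hr =>
    hp r (by simpa [eval_map_algebraMap] using isRoot_of_mem_roots hr)
  have hmirror : ‖aeval (-z) p‖ = ‖aeval (-conj z) p‖ := by
    rw [← map_neg, aeval_conj, Complex.norm_conj]
  rw [hmirror, ← eval_map_algebraMap, ← eval_map_algebraMap]
  exact norm_eval_neg_conj_lt_norm_eval (by rwa [natDegree_map]) hroots hz

theorem aeval_neg_eq_zero_of_re_eq_zero {p : ℝ[X]} {z : ℂ} (hz : z.re = 0)
    (h : aeval z p = 0) : aeval (-z) p = 0 := by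
  have hconj : conj z = -z := Complex.ext (by simp [hz]) (by simp)
  rw [← hconj, aeval_conj, h, map_zero]

theorem hurwitzStable_iff_R_maps_into_unit_disc_general
    (n : ℕ) (hn : 1 ≤ n) (p : Polynomial ℝ)
    (hdeg : p.natDegree = n) :
    HurwitzStable p ↔
      ((∀ z : ℂ, ¬(Polynomial.aeval z p = 0 ∧ Polynomial.aeval (-z) p = 0)) ∧
        ∀ z : ℂ, 0 < z.re →
          Polynomial.aeval z p ≠ 0 ∧
            ‖((-1 : ℂ) ^ n * Polynomial.aeval (-z) p) /
              Polynomial.aeval z p‖ < 1) := by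
  constructor
  · intro hp
    refine ⟨fun z ⟨hz, hnegz⟩ => ?_, fun z hz => ?_⟩
    · have hneg : (-z).re < 0 := hp (-z) hnegz
      rw [Complex.neg_re] at hneg
      linarith [hp z hz]
    have hpz : aeval z p ≠ 0 := fun h => (hp z h).not_gt hz
    refine ⟨hpz, ?_⟩
    rw [norm_div, norm_mul, norm_pow, norm_neg, norm_one, one_pow, one_mul,
      div_lt_one (norm_pos_iff.mpr hpz)]
    exact hp.norm_aeval_neg_lt_norm_aeval (hdeg ▸ hn) hz
  · rintro ⟨hcommon, hright⟩ z hz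
    rcases lt_trichotomy z.re 0 with hlt | heq | hgt
    · exact hlt
    · exact (hcommon z ⟨hz, aeval_neg_eq_zero_of_re_eq_zero heq hz⟩).elim
    · exact ((hright z hgt).1 hz).elim

/-- A real polynomial `p` of degree `n ≥ 1` with positive leading coefficient is
Hurwitz stable iff `p(z)` and `p(-z)` have no common complex root (so that
`R(z) = (-1)^n p(-z)/p(z)` has exactly `n` poles) and `R` maps the open right
half-plane into the open unit disc. -/
theorem hurwitzStable_iff_R_maps_into_unit_disc
    (n : ℕ) (hn : 1 ≤ n) (p : Polynomial ℝ)
    (hdeg : p.natDegree = n) (hlead : 0 < p.leadingCoeff) :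
    HurwitzStable p ↔
      ((∀ z : ℂ, ¬(Polynomial.aeval z p = 0 ∧ Polynomial.aeval (-z) p = 0)) ∧
        ∀ z : ℂ, 0 < z.re →
          Polynomial.aeval z p ≠ 0 ∧
            ‖((-1 : ℂ) ^ n * Polynomial.aeval (-z) p) /
              Polynomial.aeval z p‖ < 1) :=
  hurwitzStable_iff_R_maps_into_unit_disc_general n hn p hdeg
end

section
/- Let p(z) = a_0 z^n + a_1 z^{n−1} + ⋯ + a_n be a real polynomial of degree n ≥ 1 with a_0 > 0, let Φ be its associated function with Laurent coefficients s_0, s_1, s_2, … at infinity, and let D_j(Φ) = det[(s_{i+k})_{i,k=0}^{j−1}] and D̂_j(Φ) = det[(s_{i+k+1})_{i,k=0}^{j−1}] be the corresponding Hankel determinants. Then D_j(Φ) = Δ_{2j−1}(p)/a_0^{2j−1} for j = 1, …, ⌊(n+1)/2⌋, and D̂_j(Φ) = (−1)^j Δ_{2j}(p)/a_0^{2j} for j = 1, …, ⌊n/2⌋, where Δ_k(p) are the Hurwitz minors of p. -/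
open Polynomial

/-- The coefficient `a_m` of `z^(n-m)` in `p` (where `n = p.natDegree`), with the
convention `a_m = 0` for `m < 0` or `m > n`. -/
noncomputable def aCoeff (p : Polynomial ℝ) (m : ℤ) : ℝ :=
  if 0 ≤ m ∧ m ≤ (p.natDegree : ℤ) then p.coeff (p.natDegree - m.toNat) else 0

/-- The `k`-th Hurwitz minor `Δ_k(p) = det[(a_{2j-i})]` with `i, j` running over `1, …, k`;
`Δ_0(p) = 1` (determinant of the empty matrix). -/
noncomputable def hurwitzMinor (p : Polynomial ℝ) (k : ℕ) : ℝ :=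
  Matrix.det (Matrix.of fun i j : Fin k =>
    aCoeff p (2 * ((j : ℤ) + 1) - ((i : ℤ) + 1)))

/-!
Write `a_m = aCoeff p m` and `E = Σ a_{2m} X^m`, `O = Σ a_{2m+1} X^m`. Up to reversal of
coefficients `O / E` is the associated function, so the hypothesis says `O = E · S` with
`S = Σ s_j X^j`. Row `2w` of the Hurwitz matrix lists the coefficients of `X^w O = X^w S · E` and
row `2w + 1` those of `X^w E`. Hence `H_k = M_k T_k`, where `T_k` is the upper triangular Toeplitz
matrix of `E`, of determinant `a_0^k`, and `M_k` has rows `X^w S` and `X^w`. The rows `X^w` are unit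
vectors, so after a permutation of columns `M_k` is block triangular, with an identity block and
a `⌈k/2⌉ × ⌈k/2⌉` Hankel block in the `s_j`; the permutation has sign `(-1)^(⌊k/2⌋⌈k/2⌉)`.
-/

section Permutation

/-- Row `2r + 1` of `reducedHurwitzMatrix` is the unit vector at column `r`; the rows `2r` take the
remaining columns from the right. -/
def hurwitzPerm (k : ℕ) : Equiv.Perm (Fin k) where
  toFun m := ⟨if m.val % 2 = 0 then k - 1 - m / 2 else m / 2, by grind⟩
  invFun m := ⟨if 2 * m.val + 1 < k then 2 * m + 1 else 2 * (k - 1 - m), by grind⟩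
  left_inv m := by ext; grind
  right_inv m := by ext; grind

theorem hurwitzPerm_apply (k : ℕ) (m : Fin k) :
    (hurwitzPerm k m : ℕ) = if m.val % 2 = 0 then k - 1 - m / 2 else m / 2 := rfl

theorem hurwitzPerm_succ (k : ℕ) :
    hurwitzPerm (k + 1) = Fin.cycleIcc ⟨k / 2, by omega⟩ (Fin.last k) *
      (hurwitzPerm k).extendDomain (finSuccAboveEquiv (Fin.last k)) := by
  ext m
  induction m using Fin.lastCases with
  | last =>
    rw [Equiv.Perm.mul_apply, Equiv.Perm.extendDomain_apply_not_subtype _ _ (by simp),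
      Fin.cycleIcc_of_last (Fin.le_last _), hurwitzPerm_apply]
    simp only [Fin.val_last]
    grind
  | cast i =>
    have h := (hurwitzPerm k).extendDomain_apply_image (finSuccAboveEquiv (Fin.last k)) i
    simp only [finSuccAboveEquiv_apply, Fin.succAbove_last] at h
    rw [Equiv.Perm.mul_apply, h, hurwitzPerm_apply]
    rcases lt_or_ge (hurwitzPerm k i : ℕ) (k / 2) with hi | hi
    · rw [Fin.cycleIcc_of_lt (by simpa [Fin.lt_def] using hi)]
      simp only [Fin.val_castSucc, hurwitzPerm_apply] at hi ⊢
      grind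
    · rw [Fin.cycleIcc_of_ge_of_lt (by simpa [Fin.le_def] using hi) (Fin.castSucc_lt_last _)]
      simp only [Fin.val_add_one, Fin.val_castSucc, hurwitzPerm_apply] at hi ⊢
      grind

theorem sign_hurwitzPerm (k : ℕ) :
    Equiv.Perm.sign (hurwitzPerm k) = (-1) ^ (k / 2 * ((k + 1) / 2)) := by
  induction k with
  | zero => rfl
  | succ k ih =>
    rw [hurwitzPerm_succ, map_mul, Equiv.Perm.sign_extendDomain, ih,
      Fin.sign_cycleIcc_of_le (Fin.le_last _), ← pow_add]
    congr 1
    simp only [Fin.val_last]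
    have : (k + 1 + 1) / 2 = k / 2 + 1 := by omega
    rw [this, mul_add, mul_one, mul_comm]
    omega

/-- Even positions in decreasing order, then odd positions; the reversal makes the Hankel block of
`reducedHurwitzMatrix` come out as `s (r + c + (k + 1) % 2)`. -/
noncomputable def hurwitzRowEquiv {k j : ℕ} (hj : (k + 1) / 2 = j) : Fin j ⊕ Fin (k / 2) ≃ Fin k :=
  Equiv.ofBijective
    (Sum.elim (fun r => ⟨2 * (j - 1 - r), by omega⟩) fun x => ⟨2 * x + 1, by omega⟩) <| by
      rw [Fintype.bijective_iff_injective_and_card, Fintype.card_sum, Fintype.card_fin,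
        Fintype.card_fin, Fintype.card_fin]
      refine ⟨?_, by omega⟩
      rintro (x | x) (y | y) h <;> simp only [Sum.elim_inl, Sum.elim_inr, Fin.ext_iff] at h <;>
        grind

variable {k j : ℕ} (hj : (k + 1) / 2 = j)

theorem hurwitzRowEquiv_inl (r : Fin j) : (hurwitzRowEquiv hj (.inl r) : ℕ) = 2 * (j - 1 - r) :=
  rfl

theorem hurwitzRowEquiv_inr (x : Fin (k / 2)) : (hurwitzRowEquiv hj (.inr x) : ℕ) = 2 * x + 1 :=
  rfl

theorem hurwitzPerm_hurwitzRowEquiv_inl (c : Fin j) :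
    (hurwitzPerm k (hurwitzRowEquiv hj (.inl c)) : ℕ) = k - j + c := by
  rw [hurwitzPerm_apply, hurwitzRowEquiv_inl, if_pos (by omega)]
  omega

theorem hurwitzPerm_hurwitzRowEquiv_inr (x : Fin (k / 2)) :
    (hurwitzPerm k (hurwitzRowEquiv hj (.inr x)) : ℕ) = x := by
  rw [hurwitzPerm_apply, hurwitzRowEquiv_inr, if_neg (by omega)]
  omega

end Permutation

section HurwitzMatrix

open PowerSeries

variable {R : Type*} [CommRing R]

noncomputable def hurwitzMatrix (a : ℤ → R) (k : ℕ) : Matrix (Fin k) (Fin k) R :=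
  Matrix.of fun i j => a (2 * ((j : ℤ) + 1) - ((i : ℤ) + 1))

noncomputable def reducedHurwitzMatrix (S : R⟦X⟧) (k : ℕ) : Matrix (Fin k) (Fin k) R :=
  Matrix.of fun i j => coeff j (PowerSeries.X ^ (i / 2 : ℕ) * if (i : ℕ) % 2 = 0 then S else 1)

noncomputable def upperToeplitz (E : R⟦X⟧) (k : ℕ) : Matrix (Fin k) (Fin k) R :=
  Matrix.of fun i j => coeff j (PowerSeries.X ^ (i : ℕ) * E)

theorem det_upperToeplitz (E : R⟦X⟧) (k : ℕ) :
    (upperToeplitz E k).det = constantCoeff E ^ k := by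
  rw [Matrix.det_of_isUpperTriangular]
  · simp [upperToeplitz, PowerSeries.coeff_X_pow_mul']
  · intro i j hij
    have : ¬ i ≤ j := not_le.mpr hij
    simp [upperToeplitz, PowerSeries.coeff_X_pow_mul', this]

theorem coeff_mul_eq_sum_fin (P E : R⟦X⟧) {j k : ℕ} (hj : j < k) :
    coeff j (P * E) = ∑ c : Fin k, coeff c P * coeff j (PowerSeries.X ^ (c : ℕ) * E) := by
  rw [PowerSeries.coeff_mul,
    Finset.Nat.sum_antidiagonal_eq_sum_range_succ (fun c d => coeff c P * coeff d E),
    Fin.sum_univ_eq_sum_range (fun c => coeff c P * coeff j (PowerSeries.X ^ c * E)),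
    ← Finset.sum_range_add_sum_Ico _ (show j + 1 ≤ k by omega),
    Finset.sum_eq_zero (s := Finset.Ico _ _), add_zero]
  · refine Finset.sum_congr rfl fun c hc => ?_
    rw [PowerSeries.coeff_X_pow_mul', if_pos (Nat.lt_succ_iff.mp (Finset.mem_range.mp hc))]
  · intro c hc
    rw [PowerSeries.coeff_X_pow_mul', if_neg (by grind), mul_zero]

noncomputable def evenSeries (a : ℤ → R) : R⟦X⟧ := PowerSeries.mk fun m => a (2 * m)

noncomputable def oddSeries (a : ℤ → R) : R⟦X⟧ := PowerSeries.mk fun m => a (2 * m + 1)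

theorem coeff_X_pow_mul_evenSeries {a : ℤ → R} (ha : ∀ z < 0, a z = 0) (w j : ℕ) :
    coeff j (PowerSeries.X ^ w * evenSeries a) = a (2 * j - 2 * w) := by
  rw [evenSeries, PowerSeries.coeff_X_pow_mul', coeff_mk]
  split_ifs with h
  · congr 1; push_cast [h]; ring
  · exact (ha _ (by omega)).symm

theorem coeff_X_pow_mul_oddSeries {a : ℤ → R} (ha : ∀ z < 0, a z = 0) (w j : ℕ) :
    coeff j (PowerSeries.X ^ w * oddSeries a) = a (2 * j + 1 - 2 * w) := by
  rw [oddSeries, PowerSeries.coeff_X_pow_mul', coeff_mk]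
  split_ifs with h
  · congr 1; push_cast [h]; ring
  · exact (ha _ (by omega)).symm

theorem reducedHurwitzMatrix_mul_upperToeplitz {a : ℤ → R} (ha : ∀ z < 0, a z = 0) {S : R⟦X⟧}
    (hS : oddSeries a = evenSeries a * S) (k : ℕ) :
    reducedHurwitzMatrix S k * upperToeplitz (evenSeries a) k = hurwitzMatrix a k := by
  ext i j
  simp only [Matrix.mul_apply, reducedHurwitzMatrix, upperToeplitz, hurwitzMatrix, Matrix.of_apply,
    ← coeff_mul_eq_sum_fin _ _ j.isLt, mul_assoc]
  split_ifs with hi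
  · rw [mul_comm S, ← hS, coeff_X_pow_mul_oddSeries ha]
    congr 1; omega
  · rw [one_mul, coeff_X_pow_mul_evenSeries ha]
    congr 1; omega

theorem det_reducedHurwitzMatrix (s : ℕ → R) {k j : ℕ} (hj : (k + 1) / 2 = j) :
    Equiv.Perm.sign (hurwitzPerm k) * (reducedHurwitzMatrix (mk s) k).det =
      (Matrix.of fun r c : Fin j => s (r + c + (k + 1) % 2)).det := by
  set e := hurwitzRowEquiv hj
  set N := ((reducedHurwitzMatrix (mk s) k).submatrix id (hurwitzPerm k)).submatrix e e with hN
  have hN_apply (x y) : N x y = coeff (hurwitzPerm k (e y))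
      (PowerSeries.X ^ ((e x : ℕ) / 2) * if (e x : ℕ) % 2 = 0 then mk s else 1) := rfl
  have h11 : N.toBlocks₁₁ = Matrix.of fun r c : Fin j => s (r + c + (k + 1) % 2) := by
    ext r c
    rw [Matrix.toBlocks₁₁, Matrix.of_apply, Matrix.of_apply, hN_apply,
      hurwitzPerm_hurwitzRowEquiv_inl, hurwitzRowEquiv_inl, if_pos (by omega),
      PowerSeries.coeff_X_pow_mul', if_pos (by omega), coeff_mk]
    congr 1
    omega
  have h21 : N.toBlocks₂₁ = 0 := by
    ext x c
    rw [Matrix.toBlocks₂₁, Matrix.of_apply, hN_apply, hurwitzPerm_hurwitzRowEquiv_inl,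
      hurwitzRowEquiv_inr, if_neg (by omega), mul_one, PowerSeries.coeff_X_pow, if_neg (by omega),
      Matrix.zero_apply]
  have h22 : N.toBlocks₂₂ = 1 := by
    ext x y
    rw [Matrix.toBlocks₂₂, Matrix.of_apply, hN_apply, hurwitzPerm_hurwitzRowEquiv_inr,
      hurwitzRowEquiv_inr, if_neg (by omega), mul_one, PowerSeries.coeff_X_pow, Matrix.one_apply]
    grind
  rw [← Matrix.det_permute', ← Matrix.det_submatrix_equiv_self e, ← hN,
    ← Matrix.fromBlocks_toBlocks N, h11, h21, h22, Matrix.det_fromBlocks_zero₂₁, Matrix.det_one,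
    mul_one]

theorem det_hurwitzMatrix {a : ℤ → R} (ha : ∀ z < 0, a z = 0) {s : ℕ → R}
    (hS : oddSeries a = evenSeries a * PowerSeries.mk s) {k j : ℕ} (hj : (k + 1) / 2 = j) :
    (-1) ^ (k / 2 * j) * (hurwitzMatrix a k).det =
      a 0 ^ k * (Matrix.of fun r c : Fin j => s (r + c + (k + 1) % 2)).det := by
  rw [← reducedHurwitzMatrix_mul_upperToeplitz ha hS, Matrix.det_mul, det_upperToeplitz,
    ← det_reducedHurwitzMatrix s hj, sign_hurwitzPerm, hj]
  simp only [evenSeries, constantCoeff_mk]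
  push_cast
  ring

end HurwitzMatrix

section Polynomial

variable {R : Type*} [CommSemiring R] (pe po : R[X])

theorem coeff_comp_X_sq_add_two_mul (m : ℕ) :
    (pe.comp (X ^ 2) + X * po.comp (X ^ 2)).coeff (2 * m) = pe.coeff m := by
  rw [coeff_add, ← expand_eq_comp_X_pow, ← expand_eq_comp_X_pow, coeff_expand two_pos,
    if_pos (dvd_mul_right 2 m), Nat.mul_div_cancel_left m two_pos]
  rcases m with _ | m
  · simp
  · rw [show 2 * (m + 1) = 2 * m + 1 + 1 by ring, Polynomial.coeff_X_mul, coeff_expand two_pos,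
      if_neg (by omega), add_zero]

theorem coeff_comp_X_sq_add_two_mul_add_one (m : ℕ) :
    (pe.comp (X ^ 2) + X * po.comp (X ^ 2)).coeff (2 * m + 1) = po.coeff m := by
  rw [coeff_add, ← expand_eq_comp_X_pow, ← expand_eq_comp_X_pow, coeff_expand two_pos,
    if_neg (by omega), Polynomial.coeff_X_mul, coeff_expand two_pos, if_pos (dvd_mul_right 2 m),
    Nat.mul_div_cancel_left m two_pos, zero_add]

end Polynomial

theorem aCoeff_natCast (p : ℝ[X]) (m : ℕ) :
    aCoeff p m = if m ≤ p.natDegree then p.coeff (p.natDegree - m) else 0 := by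
  simp [aCoeff]

theorem aCoeff_zero (p : ℝ[X]) : aCoeff p 0 = p.leadingCoeff := by
  simpa using aCoeff_natCast p 0

section EvenOddParts

variable {n : ℕ} {p pe po : ℝ[X]}

theorem oddSeries_aCoeff (hp : p = pe.comp (X ^ 2) + X * po.comp (X ^ 2))
    (hdeg : p.natDegree = n) :
    oddSeries (aCoeff p) =
      PowerSeries.mk fun k => if k ≤ (n + 1) / 2 - 1 then
        (if Even n then po else pe).coeff ((n + 1) / 2 - 1 - k) else 0 := by
  subst hp
  ext m
  rw [oddSeries, PowerSeries.coeff_mk, PowerSeries.coeff_mk,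
    show 2 * (m : ℤ) + 1 = ((2 * m + 1 : ℕ) : ℤ) by push_cast; ring, aCoeff_natCast, hdeg]
  rcases Nat.even_or_odd' n with ⟨l, rfl | rfl⟩
  · rw [if_pos (even_two_mul l)]
    by_cases hm : 2 * m + 1 ≤ 2 * l
    · rw [if_pos hm, if_pos (by omega), show 2 * l - (2 * m + 1) = 2 * (l - 1 - m) + 1 by omega,
        coeff_comp_X_sq_add_two_mul_add_one, show (2 * l + 1) / 2 - 1 - m = l - 1 - m by omega]
    · rw [if_neg hm]
      split_ifs
      · -- only `n = 0`, where `(n + 1) / 2 - 1` truncates to `0`; use `p.coeff 1 = 0`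
        obtain ⟨rfl, rfl⟩ : l = 0 ∧ m = 0 := by omega
        rw [← coeff_comp_X_sq_add_two_mul_add_one pe po 0,
          coeff_eq_zero_of_natDegree_lt (by omega)]
      · rfl
  · rw [if_neg (Nat.not_even_two_mul_add_one l)]
    by_cases hm : 2 * m + 1 ≤ 2 * l + 1
    · rw [if_pos hm, if_pos (by omega), show 2 * l + 1 - (2 * m + 1) = 2 * (l - m) by omega,
        coeff_comp_X_sq_add_two_mul, show (2 * l + 1 + 1) / 2 - 1 - m = l - m by omega]
    · rw [if_neg hm, if_neg (by omega)]

theorem evenSeries_aCoeff (hp : p = pe.comp (X ^ 2) + X * po.comp (X ^ 2))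
    (hdeg : p.natDegree = n) :
    evenSeries (aCoeff p) =
      PowerSeries.mk fun k => if k ≤ (n + 1) / 2 then
        (if Even n then pe else X * po).coeff ((n + 1) / 2 - k) else 0 := by
  subst hp
  ext m
  rw [evenSeries, PowerSeries.coeff_mk, PowerSeries.coeff_mk,
    show 2 * (m : ℤ) = ((2 * m : ℕ) : ℤ) by push_cast; ring, aCoeff_natCast, hdeg]
  rcases Nat.even_or_odd' n with ⟨l, rfl | rfl⟩
  · rw [if_pos (even_two_mul l)]
    by_cases hm : 2 * m ≤ 2 * l
    · rw [if_pos hm, if_pos (by omega), show 2 * l - 2 * m = 2 * (l - m) by omega,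
        coeff_comp_X_sq_add_two_mul, show (2 * l + 1) / 2 - m = l - m by omega]
    · rw [if_neg hm, if_neg (by omega)]
  · rw [if_neg (Nat.not_even_two_mul_add_one l)]
    by_cases hm : 2 * m ≤ 2 * l + 1
    · rw [if_pos hm, if_pos (by omega), show 2 * l + 1 - 2 * m = 2 * (l - m) + 1 by omega,
        coeff_comp_X_sq_add_two_mul_add_one, show (2 * l + 1 + 1) / 2 - m = l - m + 1 by omega,
        coeff_X_mul]
    · by_cases hm' : m = l + 1
      · rw [if_neg hm, if_pos (by omega), hm', show (2 * l + 1 + 1) / 2 - (l + 1) = 0 by omega,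
          coeff_X_mul_zero]
      · rw [if_neg hm, if_neg (by omega)]

end EvenOddParts

theorem hurwitzMinor_eq_det (p : ℝ[X]) (k : ℕ) :
    hurwitzMinor p k = (hurwitzMatrix (aCoeff p) k).det := rfl

theorem hankel_dets_of_assoc_function_eq_hurwitz_minors_general
    (n : ℕ) (p pe po : Polynomial ℝ)
    (hdeg : p.natDegree = n) (hlead : 0 < p.leadingCoeff)
    (hparts : p = pe.comp (Polynomial.X ^ 2) + Polynomial.X * po.comp (Polynomial.X ^ 2))
    (s : ℕ → ℝ)
    (hs : PowerSeries.mk (fun k => if k ≤ (n + 1) / 2 - 1 then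
            (if Even n then po else pe).coeff ((n + 1) / 2 - 1 - k) else 0) =
          PowerSeries.mk (fun k => if k ≤ (n + 1) / 2 then
            (if Even n then pe else Polynomial.X * po).coeff ((n + 1) / 2 - k) else 0) *
            PowerSeries.mk s) :
    (∀ j, 1 ≤ j → j ≤ (n + 1) / 2 →
        Matrix.det (Matrix.of fun i k : Fin j => s ((i : ℕ) + (k : ℕ))) =
          hurwitzMinor p (2 * j - 1) / p.leadingCoeff ^ (2 * j - 1)) ∧
    (∀ j, 1 ≤ j → j ≤ n / 2 →
        Matrix.det (Matrix.of fun i k : Fin j => s ((i : ℕ) + (k : ℕ) + 1)) =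
          (-1 : ℝ) ^ j * hurwitzMinor p (2 * j) / p.leadingCoeff ^ (2 * j)) := by
  have ha : ∀ z < 0, aCoeff p z = 0 := fun z hz => if_neg (by omega)
  have hS : oddSeries (aCoeff p) = evenSeries (aCoeff p) * PowerSeries.mk s := by
    rw [oddSeries_aCoeff hparts hdeg, evenSeries_aCoeff hparts hdeg, hs]
  have hlc (k : ℕ) : p.leadingCoeff ^ k ≠ 0 := pow_ne_zero k hlead.ne'
  refine ⟨fun j hj _ => ?_, fun j hj _ => ?_⟩
  · have h := det_hurwitzMatrix ha hS (k := 2 * j - 1) (j := j) (by omega)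
    rw [show (2 * j - 1) / 2 * j = j * (j - 1) by rw [mul_comm]; congr 1; omega,
      (Nat.even_mul_pred_self j).neg_one_pow, one_mul, show (2 * j - 1 + 1) % 2 = 0 by omega,
      aCoeff_zero] at h
    simp only [add_zero] at h
    rw [eq_div_iff (hlc _), hurwitzMinor_eq_det, h, mul_comm]
  · have h := det_hurwitzMatrix ha hS (k := 2 * j) (j := j) (by omega)
    rw [show 2 * j / 2 * j = j * (j - 1) + j by
        rw [Nat.mul_div_cancel_left j two_pos, Nat.mul_sub_one, Nat.sub_add_cancel j.le_mul_self],
      pow_add, (Nat.even_mul_pred_self j).neg_one_pow, one_mul, show (2 * j + 1) % 2 = 1 by omega,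
      aCoeff_zero] at h
    rw [eq_div_iff (hlc _), hurwitzMinor_eq_det, h, mul_comm]

/-- Hankel determinants of the associated function `Φ` versus Hurwitz minors.  Writing
`p(z) = pe(z²) + z·po(z²)` of degree `n ≥ 1` with positive leading coefficient, the
associated function is `Φ = num/den` with `num = po`, `den = pe` for even `n` and
`num = pe`, `den = X·po` for odd `n`; its Laurent coefficients `s_0, s_1, …` at infinity
are determined by the formal power series identity `rev(num) = rev(den) · Σ_j s_j w^j`
(coefficient reversal at expected degrees `l - 1` and `l`, `l = ⌊(n+1)/2⌋`).  Then
`D_j(Φ) = Δ_{2j-1}(p)/a_0^{2j-1}` for `j = 1, …, ⌊(n+1)/2⌋` and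
`D̂_j(Φ) = (-1)^j Δ_{2j}(p)/a_0^{2j}` for `j = 1, …, ⌊n/2⌋`. -/
theorem hankel_dets_of_assoc_function_eq_hurwitz_minors
    (n : ℕ) (hn : 1 ≤ n) (p pe po : Polynomial ℝ)
    (hdeg : p.natDegree = n) (hlead : 0 < p.leadingCoeff)
    (hparts : p = pe.comp (Polynomial.X ^ 2) + Polynomial.X * po.comp (Polynomial.X ^ 2))
    (s : ℕ → ℝ)
    (hs : PowerSeries.mk (fun k => if k ≤ (n + 1) / 2 - 1 then
            (if Even n then po else pe).coeff ((n + 1) / 2 - 1 - k) else 0) =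
          PowerSeries.mk (fun k => if k ≤ (n + 1) / 2 then
            (if Even n then pe else Polynomial.X * po).coeff ((n + 1) / 2 - k) else 0) *
            PowerSeries.mk s) :
    (∀ j, 1 ≤ j → j ≤ (n + 1) / 2 →
        Matrix.det (Matrix.of fun i k : Fin j => s ((i : ℕ) + (k : ℕ))) =
          hurwitzMinor p (2 * j - 1) / p.leadingCoeff ^ (2 * j - 1)) ∧
    (∀ j, 1 ≤ j → j ≤ n / 2 →
        Matrix.det (Matrix.of fun i k : Fin j => s ((i : ℕ) + (k : ℕ) + 1)) =
          (-1 : ℝ) ^ j * hurwitzMinor p (2 * j) / p.leadingCoeff ^ (2 * j)) :=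
  hankel_dets_of_assoc_function_eq_hurwitz_minors_general n p pe po hdeg hlead hparts s hs
end
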